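/- arXiv:1905.03173 — 4 statements merged into one kernel-verified Lean document; each statement's English description precedes it below -/
import Mathlib

section
/- The sum of the interior angles of a spherical triangle is strictly greater than π: for linearly independent unit vectors a, b, c in EuclideanSpace ℝ (Fin 3), the interior angles θ_a, θ_b, θ_c of the spherical triangle with vertices a, b, c satisfy θ_a + θ_b + θ_c > π. -/
open Real InnerProductGeometry
open scoped RealInnerProductSpace

noncomputable section SphericalAux

local notation "E3" => EuclideanSpace ℝ (Fin 3)

/-- Cross product on `EuclideanSpace ℝ (Fin 3)`. -/
def cross3 (x y : EuclideanSpace ℝ (Fin 3)) : EuclideanSpace ℝ (Fin 3) :=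
  (WithLp.equiv 2 (Fin 3 → ℝ)).symm
    ![x 1 * y 2 - x 2 * y 1, x 2 * y 0 - x 0 * y 2, x 0 * y 1 - x 1 * y 0]

lemma cross3_inner_left (x y : E3) : ⟪cross3 x y, x⟫ = 0 := by
  simp [cross3, PiLp.inner_apply, Fin.sum_univ_three, RCLike.inner_apply]; ring

lemma cross3_inner_right (x y : E3) : ⟪cross3 x y, y⟫ = 0 := by
  simp [cross3, PiLp.inner_apply, Fin.sum_univ_three, RCLike.inner_apply]; ring

lemma cross3_inner_cross3 (x y z : E3) :
    ⟪cross3 x y, cross3 x z⟫ = ⟪x, x⟫ * ⟪y, z⟫ - ⟪x, z⟫ * ⟪x, y⟫ := by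
  simp [cross3, PiLp.inner_apply, Fin.sum_univ_three, RCLike.inner_apply,
    EuclideanSpace.norm_sq_eq]; ring

lemma cross3_cyclic (x y z : E3) : ⟪cross3 x y, z⟫ = ⟪cross3 y z, x⟫ := by
  simp [cross3, PiLp.inner_apply, Fin.sum_univ_three, RCLike.inner_apply]; ring

lemma cross3_anticomm (x y : E3) : cross3 x y = - cross3 y x := by
  apply PiLp.ext
  intro i
  fin_cases i <;> simp [cross3] <;> ring

/-- No vector in a linearly independent triple is a combination of the other two. -/
lemma li_noc1 {x y z : E3} (h : LinearIndependent ℝ ![x, y, z]) (s t : ℝ) :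
    x ≠ s • y + t • z := by
  intro he
  rw [Fintype.linearIndependent_iff] at h
  have h0 := h ![1, -s, -t] (by
    simp only [Fin.sum_univ_three, Matrix.cons_val_zero, Matrix.cons_val_one, Matrix.head_cons,
      Matrix.cons_val_two, Matrix.tail_cons, one_smul, neg_smul]
    rw [he]; abel) 0
  simp at h0

lemma li_noc3 {x y z : E3} (h : LinearIndependent ℝ ![x, y, z]) (s t : ℝ) :
    z ≠ s • x + t • y := by
  intro he
  rw [Fintype.linearIndependent_iff] at h
  have h0 := h ![-s, -t, 1] (by
    simp only [Fin.sum_univ_three, Matrix.cons_val_zero, Matrix.cons_val_one, Matrix.head_cons,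
      Matrix.cons_val_two, Matrix.tail_cons, one_smul, neg_smul]
    rw [he]; abel) 2
  simp at h0

/-- Strict triangle inequality for angles between linearly independent unit vectors. -/
lemma strict_angle_triangle {x y z : E3} (hx : ‖x‖ = 1) (hy : ‖y‖ = 1) (hz : ‖z‖ = 1)
    (h : LinearIndependent ℝ ![x, y, z]) :
    angle x z < angle x y + angle y z := by
  have hyy : ⟪y, y⟫ = 1 := by rw [real_inner_self_eq_norm_sq, hy]; norm_num
  have hxx : ⟪x, x⟫ = 1 := by rw [real_inner_self_eq_norm_sq, hx]; norm_num
  have hzz : ⟪z, z⟫ = 1 := by rw [real_inner_self_eq_norm_sq, hz]; norm_num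
  set p := ⟪y, x⟫ with hp
  set q := ⟪y, z⟫ with hq
  set X := x - p • y with hX
  set Z := z - q • y with hZ
  have hxz : ⟪x, z⟫ = p * q + ⟪X, Z⟫ := by
    simp only [hX, hZ, inner_sub_left, inner_sub_right, real_inner_smul_left,
      real_inner_smul_right, hyy]
    rw [real_inner_comm y x, ← hp, ← hq]
    ring
  have hnX : ‖X‖ ^ 2 = 1 - p ^ 2 := by
    rw [← real_inner_self_eq_norm_sq]
    simp only [hX, inner_sub_left, inner_sub_right, real_inner_smul_left,
      real_inner_smul_right, hyy, hxx]
    rw [real_inner_comm y x, ← hp]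
    ring
  have hnZ : ‖Z‖ ^ 2 = 1 - q ^ 2 := by
    rw [← real_inner_self_eq_norm_sq]
    simp only [hZ, inner_sub_left, inner_sub_right, real_inner_smul_left,
      real_inner_smul_right, hyy, hzz]
    have hzy : ⟪z, y⟫ = q := (real_inner_comm y z).trans hq.symm
    rw [hzy]
    ring
  have hca : Real.cos (angle x y) = p := by
    rw [cos_angle, hx, hy, real_inner_comm]; simp [hp]
  have hcb : Real.cos (angle y z) = q := by
    rw [cos_angle, hy, hz]; simp [hq]
  have hsa : Real.sin (angle x y) = ‖X‖ := by
    have h1 : Real.sin (angle x y) ^ 2 = ‖X‖ ^ 2 := by rw [Real.sin_sq, hca, hnX]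
    calc Real.sin (angle x y) = √(Real.sin (angle x y) ^ 2) :=
          (Real.sqrt_sq (Real.sin_nonneg_of_nonneg_of_le_pi (angle_nonneg _ _)
            (angle_le_pi _ _))).symm
      _ = √(‖X‖ ^ 2) := by rw [h1]
      _ = ‖X‖ := Real.sqrt_sq (norm_nonneg _)
  have hsb : Real.sin (angle y z) = ‖Z‖ := by
    have h1 : Real.sin (angle y z) ^ 2 = ‖Z‖ ^ 2 := by rw [Real.sin_sq, hcb, hnZ]
    calc Real.sin (angle y z) = √(Real.sin (angle y z) ^ 2) :=
          (Real.sqrt_sq (Real.sin_nonneg_of_nonneg_of_le_pi (angle_nonneg _ _)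
            (angle_le_pi _ _))).symm
      _ = √(‖Z‖ ^ 2) := by rw [h1]
      _ = ‖Z‖ := Real.sqrt_sq (norm_nonneg _)
  have hXne : X ≠ 0 := by
    intro h0
    refine li_noc1 h p 0 ?_
    rw [zero_smul, add_zero]
    exact sub_eq_zero.mp (hX ▸ h0)
  have hZne : Z ≠ 0 := by
    intro h0
    refine li_noc3 h 0 q ?_
    rw [zero_smul, zero_add]
    exact sub_eq_zero.mp (hZ ▸ h0)
  -- strict Cauchy-Schwarz for X and -Z
  have key : ⟪X, -Z⟫ < ‖X‖ * ‖-Z‖ := by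
    rw [inner_lt_norm_mul_iff_real]
    intro heq
    have hZnorm : ‖Z‖ ≠ 0 := norm_ne_zero_iff.mpr hZne
    set t : ℝ := ‖Z‖⁻¹ * (-‖X‖) with ht
    have hXt : X = t • Z := by
      have h1 : ‖Z‖ • X = -(‖X‖ • Z) := by
        rw [norm_neg] at heq
        rw [heq, smul_neg]
      calc X = ‖Z‖⁻¹ • (‖Z‖ • X) := by rw [smul_smul, inv_mul_cancel₀ hZnorm, one_smul]
        _ = t • Z := by rw [h1, ht, mul_smul, neg_smul]
    refine li_noc1 h (p - t * q) t ?_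
    have h2 : x = p • y + t • (z - q • y) := by
      rw [← hZ, ← hXt, hX]; abel
    rw [smul_sub, smul_smul] at h2
    rw [h2, sub_smul]
    abel
  rw [norm_neg, inner_neg_right, neg_lt] at key
  have hlt : Real.cos (angle x y + angle y z) < ⟪x, z⟫ := by
    rw [Real.cos_add, hca, hcb, hsa, hsb, hxz]
    linarith
  rcases le_or_gt π (angle x y + angle y z) with hcase | hcase
  · have h1 : angle x z ≤ π := angle_le_pi _ _
    rcases h1.lt_or_eq with h2 | h2
    · linarith
    · exfalso
      obtain ⟨-, r, -, hr⟩ := angle_eq_pi_iff.mp h2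
      exact li_noc3 h r 0 (by rw [zero_smul, add_zero]; exact hr)
  · have hcxz : Real.cos (angle x z) = ⟪x, z⟫ := by
      rw [cos_angle, hx, hz]; simp
    have h1 : Real.cos (angle x y + angle y z) < Real.cos (angle x z) := by
      rw [hcxz]; exact hlt
    exact (Real.strictAntiOn_cos.lt_iff_gt
      ⟨by have h3 := angle_nonneg x y; have h4 := angle_nonneg y z; linarith, le_of_lt hcase⟩
      ⟨angle_nonneg _ _, angle_le_pi _ _⟩).mp h1

lemma li_smul3 {u v w : EuclideanSpace ℝ (Fin 3)} {r s t : ℝ} (hr : r ≠ 0) (hs : s ≠ 0)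
    (ht : t ≠ 0) (h : LinearIndependent ℝ ![u, v, w]) :
    LinearIndependent ℝ ![r • u, s • v, t • w] := by
  rw [Fintype.linearIndependent_iff] at h ⊢
  intro g hg
  simp only [Fin.sum_univ_three, Matrix.cons_val_zero, Matrix.cons_val_one, Matrix.head_cons,
    Matrix.cons_val_two, Matrix.tail_cons, smul_smul] at hg
  have h0 := h ![g 0 * r, g 1 * s, g 2 * t] (by
    simp only [Fin.sum_univ_three, Matrix.cons_val_zero, Matrix.cons_val_one, Matrix.head_cons,
      Matrix.cons_val_two, Matrix.tail_cons, smul_smul]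
    exact hg)
  intro i
  fin_cases i
  · exact (mul_eq_zero.mp (h0 0)).resolve_right hr
  · exact (mul_eq_zero.mp (h0 1)).resolve_right hs
  · exact (mul_eq_zero.mp (h0 2)).resolve_right ht

/-- Sum of pairwise angles of a linearly independent triple is less than `2π`. -/
lemma sum_angles_lt_two_pi {A B C : EuclideanSpace ℝ (Fin 3)}
    (h : LinearIndependent ℝ ![A, B, C]) :
    angle A B + angle B C + angle C A < 2 * π := by
  have hA : A ≠ 0 := by have := h.ne_zero 0; simpa using this
  have hB : B ≠ 0 := by have := h.ne_zero 1; simpa using this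
  have hC : C ≠ 0 := by have := h.ne_zero 2; simpa using this
  set u := ‖A‖⁻¹ • A with hu_def
  set v := ‖B‖⁻¹ • B with hv_def
  set w := ‖C‖⁻¹ • C with hw_def
  have hu : ‖u‖ = 1 := norm_smul_inv_norm hA
  have hv : ‖v‖ = 1 := norm_smul_inv_norm hB
  have hw : ‖w‖ = 1 := norm_smul_inv_norm hC
  have hApos : (0:ℝ) < ‖A‖⁻¹ := inv_pos.mpr (norm_pos_iff.mpr hA)
  have hBpos : (0:ℝ) < ‖B‖⁻¹ := inv_pos.mpr (norm_pos_iff.mpr hB)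
  have hCpos : (0:ℝ) < ‖C‖⁻¹ := inv_pos.mpr (norm_pos_iff.mpr hC)
  have hluvw : LinearIndependent ℝ ![u, v, w] :=
    li_smul3 (ne_of_gt hApos) (ne_of_gt hBpos) (ne_of_gt hCpos) h
  have hli' : LinearIndependent ℝ ![u, -v, w] := by
    have := li_smul3 (one_ne_zero (α := ℝ)) (by norm_num : (-1:ℝ) ≠ 0)
      (one_ne_zero (α := ℝ)) hluvw
    simpa using this
  have key := strict_angle_triangle hu (by rw [norm_neg]; exact hv) hw hli'
  rw [angle_neg_right, angle_neg_left] at key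
  have e1 : angle u v = angle A B := by
    rw [hu_def, hv_def, angle_smul_left_of_pos _ _ hApos, angle_smul_right_of_pos _ _ hBpos]
  have e2 : angle v w = angle B C := by
    rw [hv_def, hw_def, angle_smul_left_of_pos _ _ hBpos, angle_smul_right_of_pos _ _ hCpos]
  have e3 : angle w u = angle C A := by
    rw [hw_def, hu_def, angle_smul_left_of_pos _ _ hCpos, angle_smul_right_of_pos _ _ hApos]
  have e4 : angle w u = angle u w := angle_comm _ _
  linarith

lemma cross3_ne_zero {x y : EuclideanSpace ℝ (Fin 3)} (hx : ‖x‖ = 1) (hy : ‖y‖ = 1)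
    (hxy : ∀ s : ℝ, y ≠ s • x) : cross3 x y ≠ 0 := by
  intro h0
  have hxx : ⟪x, x⟫ = 1 := by rw [real_inner_self_eq_norm_sq, hx]; norm_num
  have hyy : ⟪y, y⟫ = 1 := by rw [real_inner_self_eq_norm_sq, hy]; norm_num
  have h1 := cross3_inner_cross3 x y y
  rw [h0, inner_zero_left, hxx, hyy] at h1
  set v := y - ⟪x, y⟫ • x with hv
  have h2 : ⟪v, v⟫ = 0 := by
    simp only [hv, inner_sub_left, inner_sub_right, real_inner_smul_left,
      real_inner_smul_right, hxx, hyy, real_inner_comm x y]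
    nlinarith [h1]
  refine hxy ⟪x, y⟫ ?_
  have h3 : v = 0 := inner_self_eq_zero.mp h2
  rw [hv] at h3
  exact sub_eq_zero.mp h3

lemma triple_ne_zero {a b c : EuclideanSpace ℝ (Fin 3)} (ha : ‖a‖ = 1) (hb : ‖b‖ = 1)
    (hc : ‖c‖ = 1) (hli : LinearIndependent ℝ ![a, b, c]) : ⟪cross3 b c, a⟫ ≠ 0 := by
  intro h0
  have hbc : ∀ s : ℝ, c ≠ s • b := fun s he =>
    li_noc3 hli 0 s (by rw [zero_smul, zero_add]; exact he)
  have hn := cross3_ne_zero hb hc hbc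
  have hspan : Submodule.span ℝ (Set.range ![a, b, c]) = ⊤ :=
    hli.span_eq_top_of_card_eq_finrank (by simp [finrank_euclideanSpace_fin])
  have hle : Submodule.span ℝ (Set.range ![a, b, c]) ≤ (ℝ ∙ (cross3 b c))ᗮ := by
    rw [Submodule.span_le]
    rintro v ⟨i, rfl⟩
    rw [SetLike.mem_coe, Submodule.mem_orthogonal_singleton_iff_inner_right]
    fin_cases i
    · exact h0
    · exact cross3_inner_left b c
    · exact cross3_inner_right b c
  rw [hspan, top_le_iff] at hle
  have hmem : cross3 b c ∈ (ℝ ∙ (cross3 b c))ᗮ := by rw [hle]; trivial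
  exact hn (inner_self_eq_zero.mp
    (Submodule.mem_orthogonal_singleton_iff_inner_right.mp hmem))

lemma li_cross {a b c : EuclideanSpace ℝ (Fin 3)} (ha : ‖a‖ = 1) (hb : ‖b‖ = 1)
    (hc : ‖c‖ = 1) (hli : LinearIndependent ℝ ![a, b, c]) :
    LinearIndependent ℝ ![cross3 b c, cross3 c a, cross3 a b] := by
  have Da : ⟪cross3 b c, a⟫ ≠ 0 := triple_ne_zero ha hb hc hli
  have Db : ⟪cross3 c a, b⟫ ≠ 0 := by
    rw [cross3_cyclic c a b, cross3_cyclic a b c]; exact Da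
  have Dc : ⟪cross3 a b, c⟫ ≠ 0 := by
    rw [cross3_cyclic a b c]; exact Da
  rw [Fintype.linearIndependent_iff]
  intro g hg
  simp only [Fin.sum_univ_three, Matrix.cons_val_zero, Matrix.cons_val_one, Matrix.head_cons,
    Matrix.cons_val_two, Matrix.tail_cons] at hg
  have ea := congrArg (fun v => ⟪v, a⟫) hg
  simp only [inner_add_left, real_inner_smul_left, inner_zero_left,
    cross3_inner_right c a, cross3_inner_left a b] at ea
  have ga : g 0 = 0 := by
    have : g 0 * ⟪cross3 b c, a⟫ = 0 := by linarith
    exact (mul_eq_zero.mp this).resolve_right Da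
  have eb := congrArg (fun v => ⟪v, b⟫) hg
  simp only [inner_add_left, real_inner_smul_left, inner_zero_left,
    cross3_inner_left b c, cross3_inner_right a b] at eb
  have gb : g 1 = 0 := by
    have : g 1 * ⟪cross3 c a, b⟫ = 0 := by linarith
    exact (mul_eq_zero.mp this).resolve_right Db
  have ec := congrArg (fun v => ⟪v, c⟫) hg
  simp only [inner_add_left, real_inner_smul_left, inner_zero_left,
    cross3_inner_right b c, cross3_inner_left c a] at ec
  have gc : g 2 = 0 := by
    have : g 2 * ⟪cross3 a b, c⟫ = 0 := by linarith
    exact (mul_eq_zero.mp this).resolve_right Dc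
  intro i
  fin_cases i
  · exact ga
  · exact gb
  · exact gc

/-- The tangent-vector angle at `a` equals the angle between the cross products. -/
lemma angle_tangent {a : EuclideanSpace ℝ (Fin 3)} (ha : ‖a‖ = 1)
    (u v : EuclideanSpace ℝ (Fin 3)) :
    angle (u - ⟪a, u⟫ • a) (v - ⟪a, v⟫ • a) = angle (cross3 a u) (cross3 a v) := by
  have haa : ⟪a, a⟫ = 1 := by rw [real_inner_self_eq_norm_sq, ha]; norm_num
  have hinner : ∀ p q : EuclideanSpace ℝ (Fin 3),
      ⟪p - ⟪a, p⟫ • a, q - ⟪a, q⟫ • a⟫ = ⟪cross3 a p, cross3 a q⟫ := by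
    intro p q
    rw [cross3_inner_cross3, haa]
    simp only [inner_sub_left, inner_sub_right, real_inner_smul_left, real_inner_smul_right, haa]
    rw [real_inner_comm p a]
    ring
  have hnorm : ∀ p : EuclideanSpace ℝ (Fin 3),
      ‖p - ⟪a, p⟫ • a‖ = ‖cross3 a p‖ := by
    intro p
    have hsq : ‖p - ⟪a, p⟫ • a‖ ^ 2 = ‖cross3 a p‖ ^ 2 := by
      rw [← real_inner_self_eq_norm_sq, ← real_inner_self_eq_norm_sq]
      exact hinner p p
    calc ‖p - ⟪a, p⟫ • a‖ = √(‖p - ⟪a, p⟫ • a‖ ^ 2) := (Real.sqrt_sq (norm_nonneg _)).symm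
      _ = √(‖cross3 a p‖ ^ 2) := by rw [hsq]
      _ = ‖cross3 a p‖ := Real.sqrt_sq (norm_nonneg _)
  simp only [InnerProductGeometry.angle]
  rw [hinner u v, hnorm u, hnorm v]

end SphericalAux

/-- The sum of the interior angles of a spherical triangle is strictly greater than `π`. -/
theorem spherical_triangle_angle_sum_gt_pi (a b c : EuclideanSpace ℝ (Fin 3))
    (ha : ‖a‖ = 1) (hb : ‖b‖ = 1) (hc : ‖c‖ = 1)
    (hli : LinearIndependent ℝ ![a, b, c]) :
    angle (b - ⟪a, b⟫ • a) (c - ⟪a, c⟫ • a)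
      + angle (c - ⟪b, c⟫ • b) (a - ⟪b, a⟫ • b)
      + angle (a - ⟪c, a⟫ • c) (b - ⟪c, b⟫ • c) > π := by
  have t1 : angle (b - ⟪a, b⟫ • a) (c - ⟪a, c⟫ • a) = π - angle (cross3 a b) (cross3 c a) := by
    rw [angle_tangent ha b c, cross3_anticomm a c, angle_neg_right]
  have t2 : angle (c - ⟪b, c⟫ • b) (a - ⟪b, a⟫ • b) = π - angle (cross3 b c) (cross3 a b) := by
    rw [angle_tangent hb c a, cross3_anticomm b a, angle_neg_right]
  have t3 : angle (a - ⟪c, a⟫ • c) (b - ⟪c, b⟫ • c) = π - angle (cross3 c a) (cross3 b c) := by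
    rw [angle_tangent hc a b, cross3_anticomm c b, angle_neg_right]
  have hsum := sum_angles_lt_two_pi (li_cross ha hb hc hli)
  have c1 : angle (cross3 b c) (cross3 c a) = angle (cross3 c a) (cross3 b c) := angle_comm _ _
  have c2 : angle (cross3 c a) (cross3 a b) = angle (cross3 a b) (cross3 c a) := angle_comm _ _
  have c3 : angle (cross3 b c) (cross3 a b) = angle (cross3 a b) (cross3 b c) := angle_comm _ _
  rw [t1, t2, t3]
  linarith
end

section
/- A spherical triangle is equilateral if and only if it is equiangular: for linearly independent unit vectors a, b, c in EuclideanSpace ℝ (Fin 3) with interior angles θ_a, θ_b, θ_c, one has (‖a − b‖ = ‖b − c‖ ∧ ‖b − c‖ = ‖c − a‖) if and only if (θ_a = θ_b ∧ θ_b = θ_c). (Equality of chordal side lengths ‖x − y‖ for unit vectors is equivalent to equality of the geodesic side lengths arccos⟪x,y⟫.) -/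
open Real InnerProductGeometry
open scoped RealInnerProductSpace

private theorem sph_core_lemma (p q r u v w : ℝ)
    (hu : 0 < u) (hv : 0 < v) (hw : 0 < w)
    (hu2 : u ^ 2 = 1 - p ^ 2) (hv2 : v ^ 2 = 1 - q ^ 2) (hw2 : w ^ 2 = 1 - r ^ 2)
    (hG : 0 < 1 - p ^ 2 - q ^ 2 - r ^ 2 + 2 * p * q * r) :
    ((p = r ∧ r = q) ↔
      ((r - p * q) / (u * v) = (q - p * r) / (u * w) ∧
       (q - p * r) / (u * w) = (p - q * r) / (v * w))) := by
  have hp1 : p ^ 2 < 1 := by nlinarith [sq_nonneg u]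
  have hq1 : q ^ 2 < 1 := by nlinarith [sq_nonneg v]
  have hr1 : r ^ 2 < 1 := by nlinarith [sq_nonneg w]
  have hp : -1 < p := by nlinarith
  have hq : -1 < q := by nlinarith
  have hr : -1 < r := by nlinarith
  constructor
  · rintro ⟨h1, h2⟩
    subst h1 h2
    have huv : u = v := by
      rw [← Real.sqrt_sq hu.le, ← Real.sqrt_sq hv.le, hu2, hv2]
    have huw : u = w := by
      rw [← Real.sqrt_sq hu.le, ← Real.sqrt_sq hw.le, hu2, hw2]
    subst huv huw
    constructor <;> ring_nf
  · rintro ⟨h1, h2⟩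
    set G := 1 - p ^ 2 - q ^ 2 - r ^ 2 + 2 * p * q * r with hGdef
    have huv0 : (u * v) ≠ 0 := by positivity
    have huw0 : (u * w) ≠ 0 := by positivity
    have hvw0 : (v * w) ≠ 0 := by positivity
    have e1 : (r - p * q) * w = (q - p * r) * v := by
      have h1' := div_eq_div_iff huv0 huw0 |>.mp h1
      have : ((r - p * q) * w) * u = ((q - p * r) * v) * u := by linear_combination h1'
      exact mul_right_cancel₀ hu.ne' this
    have e2 : (q - p * r) * v = (p - q * r) * u := by
      have h2' := div_eq_div_iff huw0 hvw0 |>.mp h2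
      have : ((q - p * r) * v) * w = ((p - q * r) * u) * w := by linear_combination h2'
      exact mul_right_cancel₀ hw.ne' this
    have id1 : u ^ 2 * v ^ 2 - (r - p * q) ^ 2 = G := by rw [hu2, hv2]; ring
    have id2 : u ^ 2 * w ^ 2 - (q - p * r) ^ 2 = G := by rw [hu2, hw2]; ring
    have id3 : v ^ 2 * w ^ 2 - (p - q * r) ^ 2 = G := by rw [hv2, hw2]; ring
    have sq1 : (r - p * q) ^ 2 * w ^ 2 = (q - p * r) ^ 2 * v ^ 2 := by
      linear_combination ((r - p * q) * w + (q - p * r) * v) * e1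
    have sq2 : (q - p * r) ^ 2 * v ^ 2 = (p - q * r) ^ 2 * u ^ 2 := by
      linear_combination ((q - p * r) * v + (p - q * r) * u) * e2
    have gvw : G * v ^ 2 = G * w ^ 2 := by
      linear_combination sq1 + w ^ 2 * id1 - v ^ 2 * id2
    have guv : G * u ^ 2 = G * v ^ 2 := by
      linear_combination sq2 + v ^ 2 * id2 - u ^ 2 * id3
    have hvw : v = w := by
      have h := mul_left_cancel₀ (ne_of_gt hG) gvw
      rw [← Real.sqrt_sq hv.le, ← Real.sqrt_sq hw.le, h]
    have huv : u = v := by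
      have h := mul_left_cancel₀ (ne_of_gt hG) guv
      rw [← Real.sqrt_sq hu.le, ← Real.sqrt_sq hv.le, h]
    subst hvw huv
    have n1 : r - p * q = q - p * r := mul_right_cancel₀ hu.ne' e1
    have n2 : q - p * r = p - q * r := mul_right_cancel₀ hu.ne' e2
    have f1 : (r - q) * (1 + p) = 0 := by linear_combination n1
    have f2 : (q - p) * (1 + r) = 0 := by linear_combination n2
    have hrq : r = q := by
      rcases mul_eq_zero.mp f1 with h | h
      · linarith
      · linarith
    have hqp : q = p := by
      rcases mul_eq_zero.mp f2 with h | h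
      · linarith
      · linarith
    exact ⟨hqp.symm.trans hrq.symm, hrq⟩

private theorem sph_tang_inner {E : Type*} [NormedAddCommGroup E] [InnerProductSpace ℝ E]
    (a b c : E) (ha : ⟪a, a⟫ = 1) :
    ⟪b - ⟪a, b⟫ • a, c - ⟪a, c⟫ • a⟫ = ⟪b, c⟫ - ⟪a, b⟫ * ⟪a, c⟫ := by
  have hba : ⟪b, a⟫ = ⟪a, b⟫ := real_inner_comm a b
  simp only [inner_sub_left, inner_sub_right, real_inner_smul_left, real_inner_smul_right,
    ha, hba, mul_one]
  ring

private theorem sph_tang_norm {E : Type*} [NormedAddCommGroup E] [InnerProductSpace ℝ E]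
    (a b : E) (ha : ⟪a, a⟫ = 1) :
    ‖b - ⟪a, b⟫ • a‖ = Real.sqrt (⟪b, b⟫ - ⟪a, b⟫ ^ 2) := by
  have h := sph_tang_inner a b b ha
  rw [← Real.sqrt_sq (norm_nonneg (b - ⟪a, b⟫ • a)), ← real_inner_self_eq_norm_sq, h]
  ring_nf

/-- A spherical triangle is equilateral if and only if it is equiangular. -/
theorem spherical_triangle_equilateral_iff_equiangular
    (a b c : EuclideanSpace ℝ (Fin 3))
    (ha : ‖a‖ = 1) (hb : ‖b‖ = 1) (hc : ‖c‖ = 1)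
    (hli : LinearIndependent ℝ ![a, b, c]) :
    (‖a - b‖ = ‖b - c‖ ∧ ‖b - c‖ = ‖c - a‖) ↔
      (angle (b - ⟪a, b⟫ • a) (c - ⟪a, c⟫ • a)
          = angle (c - ⟪b, c⟫ • b) (a - ⟪b, a⟫ • b)
        ∧ angle (c - ⟪b, c⟫ • b) (a - ⟪b, a⟫ • b)
          = angle (a - ⟪c, a⟫ • c) (b - ⟪c, b⟫ • c)) := by
  have ha2 : ⟪a, a⟫ = 1 := by rw [real_inner_self_eq_norm_sq, ha]; norm_num
  have hb2 : ⟪b, b⟫ = 1 := by rw [real_inner_self_eq_norm_sq, hb]; norm_num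
  have hc2 : ⟪c, c⟫ = 1 := by rw [real_inner_self_eq_norm_sq, hc]; norm_num
  set p : ℝ := ⟪a, b⟫ with hpdef
  set q : ℝ := ⟪a, c⟫ with hqdef
  set r : ℝ := ⟪b, c⟫ with hrdef
  have hba : ⟪b, a⟫ = p := real_inner_comm a b
  have hca : ⟪c, a⟫ = q := real_inner_comm a c
  have hcb : ⟪c, b⟫ = r := real_inner_comm b c
  -- Gram determinant positivity
  have hG : 0 < 1 - p ^ 2 - q ^ 2 - r ^ 2 + 2 * p * q * r := by
    set M : Matrix (Fin 3) (Fin 3) ℝ := !![1, p, q; p, 1, r; q, r, 1] with hM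
    have hPD : M.PosDef := by
      constructor
      · ext i j
        fin_cases i <;> fin_cases j <;>
          simp [hM, Matrix.conjTranspose_apply]
      · intro t ht
        have hs : t 0 • a + t 1 • b + t 2 • c ≠ 0 := by
          intro hs0
          apply ht
          have hz := Fintype.linearIndependent_iff.mp hli t ?_
          · ext i; fin_cases i <;> simpa using hz _
          · simpa [Fin.sum_univ_three] using hs0
        have hpos : (0:ℝ) < ⟪t 0 • a + t 1 • b + t 2 • c, t 0 • a + t 1 • b + t 2 • c⟫ :=
          lt_of_le_of_ne real_inner_self_nonneg (Ne.symm (inner_self_ne_zero.mpr hs))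
        have hrhs : ⟪t 0 • a + t 1 • b + t 2 • c, t 0 • a + t 1 • b + t 2 • c⟫
            = t 0 ^ 2 + t 1 ^ 2 + t 2 ^ 2
              + 2 * (t 0 * t 1) * p + 2 * (t 0 * t 2) * q + 2 * (t 1 * t 2) * r := by
          simp only [inner_add_left, inner_add_right, real_inner_smul_left,
            real_inner_smul_right, ha2, hb2, hc2, hba, hca, hcb, ← hpdef, ← hqdef, ← hrdef]
          ring
        have hform : (t.sum fun i xi => t.sum fun j xj => star xi * M i j * xj)
            = t 0 ^ 2 + t 1 ^ 2 + t 2 ^ 2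
              + 2 * (t 0 * t 1) * p + 2 * (t 0 * t 2) * q + 2 * (t 1 * t 2) * r := by
          simp [hM, Finsupp.sum_fintype, Fin.sum_univ_three]
          ring
        rw [hform, ← hrhs]
        exact hpos
    have hdet := hPD.det_pos
    rw [Matrix.det_fin_three] at hdet
    simp only [hM, Matrix.cons_val', Matrix.cons_val_zero, Matrix.cons_val_one,
      Matrix.head_cons, Matrix.empty_val', Matrix.cons_val_fin_one, Matrix.head_fin_const,
      Matrix.of_apply, Matrix.cons_val_two, Matrix.tail_cons] at hdet
    nlinarith [hdet]
  have hple : p ^ 2 ≤ 1 := (sq_le_one_iff_abs_le_one p).mpr (by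
    have := abs_real_inner_le_norm a b
    rwa [ha, hb, one_mul] at this)
  have hqle : q ^ 2 ≤ 1 := (sq_le_one_iff_abs_le_one q).mpr (by
    have := abs_real_inner_le_norm a c
    rwa [ha, hc, one_mul] at this)
  have hrle : r ^ 2 ≤ 1 := (sq_le_one_iff_abs_le_one r).mpr (by
    have := abs_real_inner_le_norm b c
    rwa [hb, hc, one_mul] at this)
  have hp1 : p ^ 2 < 1 := by nlinarith [sq_nonneg (r - p * q)]
  have hq1 : q ^ 2 < 1 := by nlinarith [sq_nonneg (r - p * q)]
  have hr1 : r ^ 2 < 1 := by nlinarith [sq_nonneg (p - q * r)]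
  set u : ℝ := Real.sqrt (1 - p ^ 2) with hudef
  set v : ℝ := Real.sqrt (1 - q ^ 2) with hvdef
  set w : ℝ := Real.sqrt (1 - r ^ 2) with hwdef
  have hu : 0 < u := Real.sqrt_pos.mpr (by linarith)
  have hv : 0 < v := Real.sqrt_pos.mpr (by linarith)
  have hw : 0 < w := Real.sqrt_pos.mpr (by linarith)
  have hu2 : u ^ 2 = 1 - p ^ 2 := Real.sq_sqrt (by linarith)
  have hv2 : v ^ 2 = 1 - q ^ 2 := Real.sq_sqrt (by linarith)
  have hw2 : w ^ 2 = 1 - r ^ 2 := Real.sq_sqrt (by linarith)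
  -- norms of tangent vectors
  have nab : ‖b - p • a‖ = u := by
    have h := sph_tang_norm a b ha2
    rw [hb2, ← hpdef, ← hudef] at h
    exact h
  have nac : ‖c - q • a‖ = v := by
    have h := sph_tang_norm a c ha2
    rw [hc2, ← hqdef, ← hvdef] at h
    exact h
  have nbc : ‖c - r • b‖ = w := by
    have h := sph_tang_norm b c hb2
    rw [hc2, ← hrdef, ← hwdef] at h
    exact h
  have nba : ‖a - p • b‖ = u := by
    have h := sph_tang_norm b a hb2
    rw [ha2, hba, ← hudef] at h
    exact h
  have nca : ‖a - q • c‖ = v := by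
    have h := sph_tang_norm c a hc2
    rw [ha2, hca, ← hvdef] at h
    exact h
  have ncb : ‖b - r • c‖ = w := by
    have h := sph_tang_norm c b hc2
    rw [hb2, hcb, ← hwdef] at h
    exact h
  -- cosines of the angles
  have keyA := sph_tang_inner a b c ha2
  rw [← hpdef, ← hqdef, ← hrdef] at keyA
  have keyB := sph_tang_inner b c a hb2
  rw [hba, hca, ← hrdef] at keyB
  have keyC := sph_tang_inner c a b hc2
  rw [hca, hcb, ← hpdef] at keyC
  have cosA : Real.cos (angle (b - p • a) (c - q • a)) = (r - p * q) / (u * v) := by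
    rw [cos_angle, keyA, nab, nac]
  have cosB : Real.cos (angle (c - r • b) (a - p • b)) = (q - p * r) / (u * w) := by
    rw [cos_angle, keyB, nbc, nba]
    rw [mul_comm w u, mul_comm r p]
  have cosC : Real.cos (angle (a - q • c) (b - r • c)) = (p - q * r) / (v * w) := by
    rw [cos_angle, keyC, nca, ncb]
  -- sides characterization
  have sqab : ‖a - b‖ ^ 2 = 2 - 2 * p := by
    rw [norm_sub_sq_real, ha, hb]; ring
  have sqbc : ‖b - c‖ ^ 2 = 2 - 2 * r := by
    rw [norm_sub_sq_real, hb, hc]; ring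
  have sqca : ‖c - a‖ ^ 2 = 2 - 2 * q := by
    rw [norm_sub_sq_real, hc, ha, hca]; ring
  have side1 : ‖a - b‖ = ‖b - c‖ ↔ p = r := by
    constructor
    · intro h
      have : ‖a - b‖ ^ 2 = ‖b - c‖ ^ 2 := by rw [h]
      rw [sqab, sqbc] at this; linarith
    · intro h
      rw [← Real.sqrt_sq (norm_nonneg (a - b)), ← Real.sqrt_sq (norm_nonneg (b - c)),
        sqab, sqbc, h]
  have side2 : ‖b - c‖ = ‖c - a‖ ↔ r = q := by
    constructor
    · intro h
      have : ‖b - c‖ ^ 2 = ‖c - a‖ ^ 2 := by rw [h]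
      rw [sqbc, sqca] at this; linarith
    · intro h
      rw [← Real.sqrt_sq (norm_nonneg (b - c)), ← Real.sqrt_sq (norm_nonneg (c - a)),
        sqbc, sqca, h]
  -- angle equality iff cosine equality
  have angle_iff : ∀ x1 y1 x2 y2 : EuclideanSpace ℝ (Fin 3),
      angle x1 y1 = angle x2 y2 ↔ Real.cos (angle x1 y1) = Real.cos (angle x2 y2) := by
    intro x1 y1 x2 y2
    exact ⟨congrArg Real.cos, fun h => Real.injOn_cos
      ⟨angle_nonneg _ _, angle_le_pi _ _⟩ ⟨angle_nonneg _ _, angle_le_pi _ _⟩ h⟩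
  rw [hba, hca, hcb, side1, side2, angle_iff, angle_iff, cosA, cosB, cosC]
  exact sph_core_lemma p q r u v w hu hv hw hu2 hv2 hw2 hG
end

section
/- Every interior angle of an equilateral spherical triangle is strictly greater than π/3: if a, b, c are linearly independent unit vectors in EuclideanSpace ℝ (Fin 3) with ‖a − b‖ = ‖b − c‖ and ‖b − c‖ = ‖c − a‖, then the interior angle of the spherical triangle with vertices a, b, c at the vertex a (and hence, by symmetry, at each vertex) is strictly greater than π/3. -/
/-!
With `t = ⟪a, b⟫ = ⟪b, c⟫ = ⟪c, a⟫` (the three sides are equal), the tangent vectors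
`u = b - t • a` and `v = c - t • a` satisfy `⟪u, v⟫ = t - t ^ 2` and `‖u‖ = ‖v‖ = √(1 - t ^ 2)`.
So `cos ∠(u, v) < 1 / 2` amounts to `2 (t - t ^ 2) < 1 - t ^ 2`, i.e. `(1 - t) ^ 2 > 0`, which holds
unless `t = 1`; in that case `a = b`, so `u = 0` and the angle is `π / 2`.
-/

open Real InnerProductGeometry
open scoped RealInnerProductSpace

section

variable {V : Type*} [NormedAddCommGroup V] [InnerProductSpace ℝ V]

theorem pi_div_three_lt_angle_of_two_mul_inner_lt {x y : V} (h : 2 * ⟪x, y⟫ < ‖x‖ * ‖y‖) :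
    π / 3 < angle x y := by
  have hpos : 0 < ‖x‖ * ‖y‖ := by
    linarith [neg_le_of_abs_le (abs_real_inner_le_norm x y)]
  have hcos : cos (angle x y) < cos (π / 3) := by
    rw [cos_angle, cos_pi_div_three, div_lt_iff₀ hpos]
    linarith
  have hpi3 : π / 3 ∈ Set.Icc 0 π := ⟨by positivity, by linarith [pi_pos]⟩
  exact (strictAntiOn_cos.lt_iff_gt ⟨angle_nonneg x y, angle_le_pi x y⟩ hpi3).mp hcos

theorem real_inner_eq_of_norm_sub_eq {x y z : V} (hxz : ‖x‖ = ‖z‖) (h : ‖x - y‖ = ‖y - z‖) :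
    ⟪x, y⟫ = ⟪y, z⟫ := by
  have := congrArg (· ^ 2) h
  simp only [norm_sub_sq_real, hxz] at this
  linarith

theorem real_inner_sub_inner_smul_sub_inner_smul {a : V} (ha : ‖a‖ = 1) (b c : V) :
    ⟪b - ⟪a, b⟫ • a, c - ⟪a, c⟫ • a⟫ = ⟪b, c⟫ - ⟪a, b⟫ * ⟪a, c⟫ := by
  simp only [inner_sub_left, inner_sub_right, real_inner_smul_left, real_inner_smul_right,
    real_inner_self_eq_norm_sq, ha, real_inner_comm a]
  ring

theorem norm_sub_inner_smul_sq {a : V} (ha : ‖a‖ = 1) (b : V) :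
    ‖b - ⟪a, b⟫ • a‖ ^ 2 = ‖b‖ ^ 2 - ⟪a, b⟫ ^ 2 := by
  rw [← real_inner_self_eq_norm_sq, real_inner_sub_inner_smul_sub_inner_smul ha,
    real_inner_self_eq_norm_sq, sq, sq]

end

theorem equilateral_spherical_triangle_angle_gt_pi_div_three_general
    (a b c : EuclideanSpace ℝ (Fin 3))
    (ha : ‖a‖ = 1) (hb : ‖b‖ = 1) (hc : ‖c‖ = 1)
    (hab : ‖a - b‖ = ‖b - c‖) (hbc : ‖b - c‖ = ‖c - a‖) :
    angle (b - ⟪a, b⟫ • a) (c - ⟪a, c⟫ • a) > π / 3 := by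
  have hbc_inner : ⟪b, c⟫ = ⟪a, b⟫ := (real_inner_eq_of_norm_sub_eq (ha.trans hc.symm) hab).symm
  have hac_inner : ⟪a, c⟫ = ⟪a, b⟫ := by
    rw [real_inner_comm, ← real_inner_eq_of_norm_sub_eq (hb.trans ha.symm) hbc, hbc_inner]
  by_cases hab_one : ⟪a, b⟫ = 1
  · have hba : b = a := ((inner_eq_one_iff_of_norm_eq_one ha hb).mp hab_one).symm
    rw [hab_one, one_smul, hba, sub_self, angle_zero_left]
    linarith [pi_pos]
  have hu : ‖b - ⟪a, b⟫ • a‖ ^ 2 = 1 - ⟪a, b⟫ ^ 2 := by rw [norm_sub_inner_smul_sq ha, hb, one_pow]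
  have hv : ‖c - ⟪a, c⟫ • a‖ ^ 2 = 1 - ⟪a, b⟫ ^ 2 := by
    rw [norm_sub_inner_smul_sq ha, hc, hac_inner, one_pow]
  have hnorm_mul : ‖b - ⟪a, b⟫ • a‖ * ‖c - ⟪a, c⟫ • a‖ = 1 - ⟪a, b⟫ ^ 2 := by
    rw [← (sq_eq_sq₀ (norm_nonneg _) (norm_nonneg _)).mp (hu.trans hv.symm), ← sq, hu]
  apply pi_div_three_lt_angle_of_two_mul_inner_lt
  rw [real_inner_sub_inner_smul_sub_inner_smul ha, hnorm_mul, hac_inner, hbc_inner]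
  nlinarith [sq_pos_of_ne_zero (sub_ne_zero.mpr hab_one)]

/-- Every interior angle of an equilateral spherical triangle is strictly greater than `π / 3`. -/
theorem equilateral_spherical_triangle_angle_gt_pi_div_three
    (a b c : EuclideanSpace ℝ (Fin 3))
    (ha : ‖a‖ = 1) (hb : ‖b‖ = 1) (hc : ‖c‖ = 1)
    (hli : LinearIndependent ℝ ![a, b, c])
    (hab : ‖a - b‖ = ‖b - c‖) (hbc : ‖b - c‖ = ‖c - a‖) :
    angle (b - ⟪a, b⟫ • a) (c - ⟪a, c⟫ • a) > π / 3 :=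
  equilateral_spherical_triangle_angle_gt_pi_div_three_general a b c ha hb hc hab hbc
end

section
/- A convexity-preserving map projection must send great-circle arcs into straight lines (and conversely): let U be a nonempty open subset of S² contained in an open hemisphere {p ∈ S² : ⟪p, u⟫ > 0} for some unit vector u, and let φ be a homeomorphism from U (with the subspace topology) onto an open set V ⊆ EuclideanSpace ℝ (Fin 2). Suppose that for every spherically convex open set A with closure contained in U, the image φ '' A is a convex subset of the plane, and that for every convex open set A′ with closure contained in V, the preimage φ⁻¹ '' A′ is spherically convex. Then: (a) for every two-dimensional linear subspace W of EuclideanSpace ℝ (Fin 3) and every connected compact set σ ⊆ U ∩ W, the image φ '' σ is contained in an affine line of the plane; and (b) for every affine line L of the plane and every connected compact set σ′ ⊆ V ∩ L, the preimage φ⁻¹ '' σ′ is contained in S² ∩ W′ for some two-dimensional linear subspace W′. -/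
open Metric Pointwise
open scoped RealInnerProductSpace

/-- A subset `s` of the unit sphere is *spherically convex* if for all `x, y ∈ s` and all
`α, β ≥ 0` with `α • x + β • y ≠ 0`, the normalization of `α • x + β • y` lies in `s`. -/
def SphericallyConvex (s : Set (EuclideanSpace ℝ (Fin 3))) : Prop :=
  ∀ x ∈ s, ∀ y ∈ s, ∀ α β : ℝ, 0 ≤ α → 0 ≤ β → α • x + β • y ≠ 0 →
    ‖α • x + β • y‖⁻¹ • (α • x + β • y) ∈ s

/-- The open positive cone over a set. -/
def posCone (s : Set (EuclideanSpace ℝ (Fin 3))) : Set (EuclideanSpace ℝ (Fin 3)) :=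
  {v | ∃ t : ℝ, 0 < t ∧ ∃ x ∈ s, v = t • x}

lemma normalize_dist {E : Type*} [NormedAddCommGroup E] [NormedSpace ℝ E] {c k : E}
    (hc : c ≠ 0) (hk : k ≠ 0) :
    ‖‖c‖⁻¹ • c - ‖k‖⁻¹ • k‖ ≤ 2 * ‖c - k‖ / ‖k‖ := by
  have hcn : (0:ℝ) < ‖c‖ := norm_pos_iff.2 hc
  have hkn : (0:ℝ) < ‖k‖ := norm_pos_iff.2 hk
  have h1 : ‖c‖⁻¹ • c - ‖k‖⁻¹ • k = (‖c‖⁻¹ - ‖k‖⁻¹) • c + ‖k‖⁻¹ • (c - k) := by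
    rw [sub_smul, smul_sub]; abel
  have e : ‖c‖⁻¹ - ‖k‖⁻¹ = (‖k‖ - ‖c‖) / (‖c‖ * ‖k‖) := by field_simp
  have habs : |‖k‖ - ‖c‖| ≤ ‖c - k‖ := by
    rw [abs_sub_comm]; exact abs_norm_sub_norm_le c k
  have h2 : ‖(‖c‖⁻¹ - ‖k‖⁻¹) • c‖ ≤ ‖c - k‖ / ‖k‖ := by
    rw [norm_smul, Real.norm_eq_abs, e, abs_div, abs_of_pos (mul_pos hcn hkn)]
    calc |‖k‖ - ‖c‖| / (‖c‖ * ‖k‖) * ‖c‖ = |‖k‖ - ‖c‖| / ‖k‖ := by field_simp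
      _ ≤ ‖c - k‖ / ‖k‖ := by gcongr
  have h3 : ‖‖k‖⁻¹ • (c - k)‖ = ‖c - k‖ / ‖k‖ := by
    rw [norm_smul, Real.norm_eq_abs, abs_of_pos (by positivity)]
    rw [inv_mul_eq_div]
  calc ‖‖c‖⁻¹ • c - ‖k‖⁻¹ • k‖ = ‖(‖c‖⁻¹ - ‖k‖⁻¹) • c + ‖k‖⁻¹ • (c - k)‖ := by rw [h1]
    _ ≤ ‖(‖c‖⁻¹ - ‖k‖⁻¹) • c‖ + ‖‖k‖⁻¹ • (c - k)‖ := norm_add_le _ _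
    _ ≤ ‖c - k‖ / ‖k‖ + ‖c - k‖ / ‖k‖ := by rw [h3]; exact add_le_add_left h2 _
    _ = 2 * ‖c - k‖ / ‖k‖ := by ring

lemma mem_posCone_iff {s : Set (EuclideanSpace ℝ (Fin 3))}
    (hs : s ⊆ sphere (0 : EuclideanSpace ℝ (Fin 3)) 1) {v : EuclideanSpace ℝ (Fin 3)} :
    v ∈ posCone s ↔ v ≠ 0 ∧ ‖v‖⁻¹ • v ∈ s := by
  constructor
  · rintro ⟨t, ht, x, hx, rfl⟩
    have hx1 : ‖x‖ = 1 := mem_sphere_zero_iff_norm.1 (hs hx)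
    have hnorm : ‖t • x‖ = t := by rw [norm_smul, hx1, Real.norm_eq_abs, abs_of_pos ht, mul_one]
    have hne : t • x ≠ 0 := by
      rw [← norm_pos_iff, hnorm]; exact ht
    refine ⟨hne, ?_⟩
    rw [hnorm, smul_smul, inv_mul_cancel₀ (ne_of_gt ht), one_smul]
    exact hx
  · rintro ⟨hne, hmem⟩
    exact ⟨‖v‖, norm_pos_iff.2 hne, ‖v‖⁻¹ • v, hmem,
      by rw [smul_smul, mul_inv_cancel₀ (norm_ne_zero_iff.2 hne), one_smul]⟩

lemma posCone_smul {s : Set (EuclideanSpace ℝ (Fin 3))} {v : EuclideanSpace ℝ (Fin 3)}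
    {t : ℝ} (ht : 0 < t) (hv : v ∈ posCone s) : t • v ∈ posCone s := by
  obtain ⟨t', ht', x, hx, rfl⟩ := hv
  exact ⟨t * t', mul_pos ht ht', x, hx, (smul_smul t t' x)⟩

lemma posCone_convex_of_convex {C : Set (EuclideanSpace ℝ (Fin 3))} (hC : Convex ℝ C) :
    Convex ℝ (posCone C) := by
  rintro v ⟨t₁, ht₁, x, hx, rfl⟩ w ⟨t₂, ht₂, y, hy, rfl⟩ a b ha hb hab
  have hs : 0 < a * t₁ + b * t₂ := by
    rcases lt_or_ge 0 a with h | h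
    · have : 0 < a * t₁ := mul_pos h ht₁
      nlinarith [mul_nonneg hb ht₂.le]
    · have ha0 : a = 0 := le_antisymm h ha
      have hb1 : b = 1 := by linarith
      rw [ha0, hb1]; simpa using ht₂
  set sσ := a * t₁ + b * t₂ with hsσ
  refine ⟨sσ, hs, (a * t₁ / sσ) • x + (b * t₂ / sσ) • y,
    hC hx hy (by positivity) (by positivity) (by field_simp; exact hsσ.symm), ?_⟩
  rw [smul_add, smul_smul, smul_smul, smul_smul, smul_smul]
  congr 1 <;> congr 1 <;> field_simp

lemma posCone_add {C : Set (EuclideanSpace ℝ (Fin 3))} (hC : Convex ℝ C)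
    {v w : EuclideanSpace ℝ (Fin 3)} (hv : v ∈ posCone C) (hw : w ∈ posCone C) :
    v + w ∈ posCone C := by
  have hmid : (1/2 : ℝ) • v + (1/2 : ℝ) • w ∈ posCone C :=
    posCone_convex_of_convex hC hv hw (by norm_num) (by norm_num) (by norm_num)
  have := posCone_smul (s := C) (t := 2) (by norm_num) hmid
  convert this using 1
  rw [smul_add, smul_smul, smul_smul]
  norm_num

lemma sphericallyConvex_sphere_inter_posCone {C : Set (EuclideanSpace ℝ (Fin 3))}
    (hC : Convex ℝ C) :
    SphericallyConvex (sphere (0 : EuclideanSpace ℝ (Fin 3)) 1 ∩ posCone C) := by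
  rintro x ⟨hxs, hxc⟩ y ⟨hys, hyc⟩ α β hα hβ hne
  have hmem : α • x + β • y ∈ posCone C := by
    rcases eq_or_lt_of_le hα with h | h
    · rcases eq_or_lt_of_le hβ with h' | h'
      · exfalso; apply hne; rw [← h, ← h']; simp
      · have : α • x + β • y = β • y := by rw [← h]; simp
        rw [this]; exact posCone_smul h' hyc
    · rcases eq_or_lt_of_le hβ with h' | h'
      · have : α • x + β • y = α • x := by rw [← h']; simp
        rw [this]; exact posCone_smul h hxc
      · exact posCone_add hC (posCone_smul h hxc) (posCone_smul h' hyc)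
  refine ⟨?_, posCone_smul (inv_pos.2 (norm_pos_iff.2 hne)) hmem⟩
  rw [mem_sphere_zero_iff_norm]
  exact norm_smul_inv_norm hne

lemma sphericallyConvex_inter_halfspace {s : Set (EuclideanSpace ℝ (Fin 3))}
    (hs : SphericallyConvex s) (w : EuclideanSpace ℝ (Fin 3)) :
    SphericallyConvex (s ∩ {p | 0 < ⟪p, w⟫}) := by
  rintro x ⟨hx, hx2⟩ y ⟨hy, hy2⟩ α β hα hβ hne
  refine ⟨hs x hx y hy α β hα hβ hne, ?_⟩
  simp only [Set.mem_setOf_eq] at hx2 hy2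
  have hsum : 0 < ⟪α • x + β • y, w⟫ := by
    rw [inner_add_left, real_inner_smul_left, real_inner_smul_left]
    rcases eq_or_lt_of_le hα with h | h
    · rcases eq_or_lt_of_le hβ with h' | h'
      · exfalso; apply hne; rw [← h, ← h']; simp
      · have : α * ⟪x, w⟫ = 0 := by rw [← h]; ring
        nlinarith
    · nlinarith [mul_nonneg hβ hy2.le]
  show 0 < ⟪‖α • x + β • y‖⁻¹ • (α • x + β • y), w⟫
  rw [real_inner_smul_left]
  have : 0 < ‖α • x + β • y‖ := norm_pos_iff.2 hne
  positivity

lemma posCone_isOpen_sphere {G : Set (EuclideanSpace ℝ (Fin 3))} (hG : IsOpen G) :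
    IsOpen (posCone (sphere (0 : EuclideanSpace ℝ (Fin 3)) 1 ∩ G)) := by
  have hcont : ContinuousOn (fun v : EuclideanSpace ℝ (Fin 3) => ‖v‖⁻¹ • v)
      {v : EuclideanSpace ℝ (Fin 3) | v ≠ 0} := by
    refine ContinuousOn.smul (f := fun v : EuclideanSpace ℝ (Fin 3) => ‖v‖⁻¹) (g := fun v => v) ?_ ?_
    · exact (continuousOn_id.norm).inv₀ (fun v hv => norm_ne_zero_iff.2 hv)
    · exact continuousOn_id
  have hopen : IsOpen {v : EuclideanSpace ℝ (Fin 3) | v ≠ 0} := isOpen_ne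
  have heq : posCone (sphere (0 : EuclideanSpace ℝ (Fin 3)) 1 ∩ G) =
      {v : EuclideanSpace ℝ (Fin 3) | v ≠ 0} ∩
        (fun v : EuclideanSpace ℝ (Fin 3) => ‖v‖⁻¹ • v) ⁻¹' G := by
    ext v
    rw [mem_posCone_iff Set.inter_subset_left]
    constructor
    · rintro ⟨hne, hmem, hmemG⟩; exact ⟨hne, hmemG⟩
    · rintro ⟨hne, hmemG⟩
      exact ⟨hne, ⟨mem_sphere_zero_iff_norm.2 (norm_smul_inv_norm hne), hmemG⟩⟩
  rw [heq]
  exact hcont.isOpen_inter_preimage hopen hG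

lemma posCone_isOpen {C : Set (EuclideanSpace ℝ (Fin 3))} (hC : IsOpen C) :
    IsOpen (posCone C) := by
  have : posCone C = ⋃ t : {t : ℝ // 0 < t}, (t : ℝ) • C := by
    ext v
    simp only [Set.mem_iUnion, Set.mem_smul_set]
    constructor
    · rintro ⟨t, ht, x, hx, rfl⟩; exact ⟨⟨t, ht⟩, x, hx, rfl⟩
    · rintro ⟨⟨t, ht⟩, x, hx, rfl⟩; exact ⟨t, ht, x, hx, rfl⟩
  rw [this]
  exact isOpen_iUnion fun t => hC.smul₀ (ne_of_gt t.2)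

lemma image_inter_eq {α β : Type*} {U : Set α} {V : Set β} {φ : α → β} {ψ : β → α}
    (hφV : φ '' U = V) (hψU : ψ '' V = U)
    (hψφ : ∀ p ∈ U, ψ (φ p) = p) (hφψ : ∀ q ∈ V, φ (ψ q) = q)
    (O : Set α) : φ '' (U ∩ O) = V ∩ ψ ⁻¹' O := by
  ext q
  constructor
  · rintro ⟨p, ⟨hpU, hpO⟩, rfl⟩
    refine ⟨hφV ▸ ⟨p, hpU, rfl⟩, ?_⟩
    rw [Set.mem_preimage, hψφ p hpU]; exact hpO
  · rintro ⟨hqV, hqO⟩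
    have hU : ψ q ∈ U := hψU ▸ ⟨q, hqV, rfl⟩
    exact ⟨ψ q, ⟨hU, hqO⟩, hφψ q hqV⟩

lemma posCone_convex_of_sphericallyConvex {s : Set (EuclideanSpace ℝ (Fin 3))}
    {u : EuclideanSpace ℝ (Fin 3)} (hsc : SphericallyConvex s)
    (hs : ∀ p ∈ s, ‖p‖ = 1 ∧ 0 < ⟪p, u⟫) : Convex ℝ (posCone s) := by
  rintro v ⟨t₁, ht₁, x, hx, rfl⟩ w ⟨t₂, ht₂, y, hy, rfl⟩ a b ha hb hab
  have hcomb : a • t₁ • x + b • t₂ • y = (a * t₁) • x + (b * t₂) • y := by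
    rw [smul_smul, smul_smul]
  rw [hcomb]
  rcases eq_or_lt_of_le (mul_nonneg ha ht₁.le) with h | h
  · rcases eq_or_lt_of_le (mul_nonneg hb ht₂.le) with h' | h'
    · exfalso
      have ha0 : a = 0 := by
        rcases mul_eq_zero.1 h.symm with h1 | h1
        · exact h1
        · exact absurd h1 (ne_of_gt ht₁)
      have hb0 : b = 0 := by
        rcases mul_eq_zero.1 h'.symm with h1 | h1
        · exact h1
        · exact absurd h1 (ne_of_gt ht₂)
      rw [ha0, hb0] at hab; norm_num at hab
    · rw [← h, zero_smul, zero_add]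
      exact ⟨b * t₂, h', y, hy, rfl⟩
  · rcases eq_or_lt_of_le (mul_nonneg hb ht₂.le) with h' | h'
    · rw [← h', zero_smul, add_zero]
      exact ⟨a * t₁, h, x, hx, rfl⟩
    · have hne : (a * t₁) • x + (b * t₂) • y ≠ 0 := by
        intro hzero
        have h1 : 0 < ⟪(a * t₁) • x + (b * t₂) • y, u⟫ := by
          rw [inner_add_left, real_inner_smul_left, real_inner_smul_left]
          nlinarith [(hs x hx).2, (hs y hy).2]
        rw [hzero, inner_zero_left] at h1
        exact lt_irrefl 0 h1
      have hmem := hsc x hx y hy (a * t₁) (b * t₂) h.le h'.le hne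
      exact ⟨‖(a * t₁) • x + (b * t₂) • y‖, norm_pos_iff.2 hne, _, hmem,
        by rw [smul_smul, mul_inv_cancel₀ (norm_ne_zero_iff.2 hne), one_smul]⟩

lemma exists_orthogonal_in_2dim {W : Submodule ℝ (EuclideanSpace ℝ (Fin 3))}
    (hW : Module.finrank ℝ W = 2) {z : EuclideanSpace ℝ (Fin 3)}
    (hzW : z ∈ W) (hz : z ≠ 0) : ∃ j ∈ W, j ≠ 0 ∧ ⟪z, j⟫ = 0 := by
  have hnle : ¬(W ≤ Submodule.span ℝ {z}) := by
    intro hle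
    have h1 : Module.finrank ℝ W ≤ Module.finrank ℝ (Submodule.span ℝ {z}) :=
      Submodule.finrank_mono hle
    rw [hW, finrank_span_singleton hz] at h1
    omega
  obtain ⟨y, hyW, hyns⟩ := SetLike.not_le_iff_exists.1 hnle
  have hz2 : ‖z‖ ^ 2 ≠ 0 := by
    have : ‖z‖ ≠ 0 := norm_ne_zero_iff.2 hz
    positivity
  refine ⟨y - (⟪z, y⟫ / ‖z‖ ^ 2) • z, W.sub_mem hyW (W.smul_mem _ hzW), ?_, ?_⟩
  · intro h
    apply hyns
    have h2 : y = (⟪z, y⟫ / ‖z‖ ^ 2) • z := by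
      have h3 := sub_eq_zero.1 h
      exact h3
    rw [h2]
    exact Submodule.smul_mem _ _ (Submodule.mem_span_singleton_self z)
  · rw [inner_sub_right, real_inner_smul_right, real_inner_self_eq_norm_sq]
    field_simp; ring

lemma eq_or_eq_neg_of_orthogonal {W : Submodule ℝ (EuclideanSpace ℝ (Fin 3))}
    (hW : Module.finrank ℝ W = 2) {z j p : EuclideanSpace ℝ (Fin 3)}
    (hzW : z ∈ W) (hjW : j ∈ W) (hpW : p ∈ W)
    (hz : ‖z‖ = 1) (hp : ‖p‖ = 1) (hj : j ≠ 0) (hzj : ⟪z, j⟫ = 0) (hpj : ⟪p, j⟫ = 0) :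
    p = z ∨ p = -z := by
  set r := p - ⟪p, z⟫ • z with hr
  have hrW : r ∈ W := W.sub_mem hpW (W.smul_mem _ hzW)
  have hz0 : z ≠ 0 := by intro h; rw [h, norm_zero] at hz; norm_num at hz
  have hrz : ⟪r, z⟫ = 0 := by
    rw [hr, inner_sub_left, real_inner_smul_left, real_inner_self_eq_norm_sq, hz]
    ring
  have hrj : ⟪r, j⟫ = 0 := by
    rw [hr, inner_sub_left, real_inner_smul_left, hzj, hpj]
    ring
  have hr0 : r = 0 := by
    by_contra hrne
    set v : Fin 3 → W := ![⟨z, hzW⟩, ⟨j, hjW⟩, ⟨r, hrW⟩] with hv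
    have hnz : ∀ i, v i ≠ 0 := by
      intro i h
      have h' : (v i : EuclideanSpace ℝ (Fin 3)) = 0 := congrArg Subtype.val h
      fin_cases i
      · exact hz0 h'
      · exact hj h'
      · exact hrne h'
    have hzr : ⟪z, r⟫ = 0 := by rw [real_inner_comm]; exact hrz
    have hjz : ⟪j, z⟫ = 0 := by rw [real_inner_comm]; exact hzj
    have hjr : ⟪j, r⟫ = 0 := by rw [real_inner_comm]; exact hrj
    have horth : Pairwise fun i k => (inner ℝ (v i) (v k) : ℝ) = 0 := by
      intro i k hik
      rw [Submodule.coe_inner]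
      fin_cases i <;> fin_cases k <;>
        first
          | exact absurd rfl hik
          | exact hzj
          | exact hzr
          | exact hjz
          | exact hjr
          | exact hrz
          | exact hrj
    have hli : LinearIndependent ℝ v := linearIndependent_of_ne_zero_of_inner_eq_zero hnz horth
    have hcard := hli.fintype_card_le_finrank
    rw [hW, Fintype.card_fin] at hcard
    omega
  rw [hr] at hr0
  have hpz : p = ⟪p, z⟫ • z := sub_eq_zero.1 hr0
  have habs : |⟪p, z⟫| = 1 := by
    have h1 : ‖p‖ = |⟪p, z⟫| * ‖z‖ := by
      conv_lhs => rw [hpz]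
      rw [norm_smul, Real.norm_eq_abs]
    rw [hp, hz, mul_one] at h1
    exact h1.symm
  rcases abs_eq (by norm_num : (0:ℝ) ≤ 1) |>.1 habs with h | h
  · left; rw [hpz, h, one_smul]
  · right; rw [hpz, h, neg_smul, one_smul]

set_option maxHeartbeats 1000000 in
lemma sphericallyConvex_of_connected_arc {W : Submodule ℝ (EuclideanSpace ℝ (Fin 3))}
    (hW : Module.finrank ℝ W = 2) {u : EuclideanSpace ℝ (Fin 3)}
    {σ : Set (EuclideanSpace ℝ (Fin 3))} (hconn : IsPreconnected σ)
    (hsub : ∀ p ∈ σ, ‖p‖ = 1 ∧ 0 < ⟪p, u⟫ ∧ p ∈ W) :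
    SphericallyConvex σ := by
  intro x hx y hy α β hα hβ hne
  obtain ⟨hx1, hxu, hxW⟩ := hsub x hx
  obtain ⟨hy1, hyu, hyW⟩ := hsub y hy
  set v := α • x + β • y with hv
  set z := ‖v‖⁻¹ • v with hz
  have hvW : v ∈ W := W.add_mem (W.smul_mem _ hxW) (W.smul_mem _ hyW)
  have hzW : z ∈ W := W.smul_mem _ hvW
  have hz1 : ‖z‖ = 1 := norm_smul_inv_norm hne
  have hz0 : z ≠ 0 := by intro h; rw [h, norm_zero] at hz1; norm_num at hz1
  have hvnorm : (0:ℝ) < ‖v‖ := norm_pos_iff.2 hne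
  -- v = ‖v‖ • z
  have hvz : v = ‖v‖ • z := by
    rw [hz, smul_smul, mul_inv_cancel₀ (ne_of_gt hvnorm), one_smul]
  -- inner products with u
  have hvu : 0 < ⟪v, u⟫ := by
    rw [hv, inner_add_left, real_inner_smul_left, real_inner_smul_left]
    rcases eq_or_lt_of_le hα with h | h
    · rcases eq_or_lt_of_le hβ with h' | h'
      · exfalso; apply hne; rw [hv, ← h, ← h']; simp
      · have hh : α * ⟪x, u⟫ = 0 := by rw [← h]; ring
        nlinarith
    · nlinarith [mul_nonneg hβ hyu.le]
  have hzu : 0 < ⟪z, u⟫ := by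
    rw [hz, real_inner_smul_left]
    positivity
  -- get orthogonal vector
  obtain ⟨j, hjW, hj0, hzj⟩ := exists_orthogonal_in_2dim hW hzW hz0
  -- the balance equation
  have hbal : α * ⟪x, j⟫ + β * ⟪y, j⟫ = 0 := by
    have h1 : ⟪v, j⟫ = ‖v‖ * ⟪z, j⟫ := by
      conv_lhs => rw [hvz]
      rw [real_inner_smul_left]
    rw [hzj, mul_zero] at h1
    rw [← h1, hv, inner_add_left, real_inner_smul_left, real_inner_smul_left]
  -- find p in σ with ⟪p, j⟫ = 0
  have hexists : ∃ p ∈ σ, ⟪p, j⟫ = 0 := by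
    have hcont : ContinuousOn (fun p : EuclideanSpace ℝ (Fin 3) => ⟪p, j⟫) σ :=
      (continuous_id.inner continuous_const).continuousOn
    have hcont0 : ContinuousOn (fun _ : EuclideanSpace ℝ (Fin 3) => (0:ℝ)) σ :=
      continuousOn_const
    rcases le_total ⟪x, j⟫ 0 with h | h
    · rcases le_total 0 ⟪y, j⟫ with h' | h'
      · obtain ⟨p, hpσ, hp⟩ := IsPreconnected.intermediate_value₂ (α := ℝ)
          (f := fun p : EuclideanSpace ℝ (Fin 3) => ⟪p, j⟫)
          (g := fun _ : EuclideanSpace ℝ (Fin 3) => (0:ℝ)) hconn hx hy hcont hcont0 h h'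
        exact ⟨p, hpσ, hp⟩
      · -- both ≤ 0 : α⟪x,j⟫ = 0 and β⟪y,j⟫ = 0
        have h1 : α * ⟪x, j⟫ = 0 ∧ β * ⟪y, j⟫ = 0 := by
          constructor <;> nlinarith [mul_nonneg hα (neg_nonneg.2 h), mul_nonneg hβ (neg_nonneg.2 h')]
        rcases h1 with ⟨h2, h3⟩
        rcases mul_eq_zero.1 h2 with h4 | h4
        · rcases mul_eq_zero.1 h3 with h5 | h5
          · exfalso; apply hne; rw [hv, h4, h5]; simp
          · exact ⟨y, hy, h5⟩
        · exact ⟨x, hx, h4⟩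
    · rcases le_total ⟪y, j⟫ 0 with h' | h'
      · obtain ⟨p, hpσ, hp⟩ := IsPreconnected.intermediate_value₂ (α := ℝ)
          (f := fun p : EuclideanSpace ℝ (Fin 3) => ⟪p, j⟫)
          (g := fun _ : EuclideanSpace ℝ (Fin 3) => (0:ℝ)) hconn hy hx hcont hcont0 h' h
        exact ⟨p, hpσ, hp⟩
      · have h1 : α * ⟪x, j⟫ = 0 ∧ β * ⟪y, j⟫ = 0 := by
          constructor <;> nlinarith [mul_nonneg hα h, mul_nonneg hβ h']
        rcases h1 with ⟨h2, h3⟩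
        rcases mul_eq_zero.1 h2 with h4 | h4
        · rcases mul_eq_zero.1 h3 with h5 | h5
          · exfalso; apply hne; rw [hv, h4, h5]; simp
          · exact ⟨y, hy, h5⟩
        · exact ⟨x, hx, h4⟩
  obtain ⟨p, hpσ, hpj⟩ := hexists
  obtain ⟨hp1, hpu, hpW⟩ := hsub p hpσ
  rcases eq_or_eq_neg_of_orthogonal hW hzW hjW hpW hz1 hp1 hj0 hzj hpj with h | h
  · rw [← h]; exact hpσ
  · exfalso
    rw [h] at hpu
    rw [inner_neg_left] at hpu
    linarith
lemma normalize_convexHull {σ : Set (EuclideanSpace ℝ (Fin 3))} {u : EuclideanSpace ℝ (Fin 3)}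
    (hsc : SphericallyConvex σ)
    (hs : ∀ p ∈ σ, ‖p‖ = 1 ∧ 0 < ⟪p, u⟫) {c : EuclideanSpace ℝ (Fin 3)}
    (hc : c ∈ convexHull ℝ σ) : ∃ k ∈ σ, ∃ t : ℝ, 0 < t ∧ c = t • k := by
  have hlin : IsLinearMap ℝ (fun x : EuclideanSpace ℝ (Fin 3) => ⟪x, u⟫) :=
    ⟨fun a b => inner_add_left a b u, fun t a => real_inner_smul_left a u t⟩
  have hcpos : 0 < ⟪c, u⟫ := by
    have hsub : σ ⊆ {x | 0 < ⟪x, u⟫} := fun p hp => (hs p hp).2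
    exact convexHull_min hsub (convex_halfSpace_gt hlin 0) hc
  have hc0 : c ≠ 0 := by
    intro h; rw [h, inner_zero_left] at hcpos; exact lt_irrefl 0 hcpos
  -- D is convex and contains σ
  set D := {v : EuclideanSpace ℝ (Fin 3) | ∃ t : ℝ, 0 ≤ t ∧ ∃ x ∈ σ, v = t • x} with hD
  have hDconv : Convex ℝ D := by
    rintro v ⟨t₁, ht₁, x, hx, rfl⟩ w ⟨t₂, ht₂, y, hy, rfl⟩ a b ha hb hab
    have hα : 0 ≤ a * t₁ := mul_nonneg ha ht₁
    have hβ : 0 ≤ b * t₂ := mul_nonneg hb ht₂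
    have hcomb : a • t₁ • x + b • t₂ • y = (a * t₁) • x + (b * t₂) • y := by
      rw [smul_smul, smul_smul]
    rcases eq_or_lt_of_le hα with h | h
    · rcases eq_or_lt_of_le hβ with h' | h'
      · exact ⟨0, le_refl 0, x, hx, by rw [hcomb, ← h, ← h']; simp⟩
      · exact ⟨b * t₂, h'.le, y, hy, by rw [hcomb, ← h]; simp⟩
    · rcases eq_or_lt_of_le hβ with h' | h'
      · exact ⟨a * t₁, h.le, x, hx, by rw [hcomb, ← h']; simp⟩
      · -- both positive: use spherical convexity
        have hneq : (a * t₁) • x + (b * t₂) • y ≠ 0 := by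
          intro hzero
          have h1 : 0 < ⟪(a * t₁) • x + (b * t₂) • y, u⟫ := by
            rw [inner_add_left, real_inner_smul_left, real_inner_smul_left]
            nlinarith [(hs x hx).2, (hs y hy).2]
          rw [hzero, inner_zero_left] at h1
          exact lt_irrefl 0 h1
        have hmem := hsc x hx y hy (a * t₁) (b * t₂) h.le h'.le hneq
        refine ⟨‖(a * t₁) • x + (b * t₂) • y‖, norm_nonneg _, _, hmem, ?_⟩
        rw [hcomb, smul_smul, mul_inv_cancel₀ (norm_ne_zero_iff.2 hneq), one_smul]
  have hσD : σ ⊆ D := fun p hp => ⟨1, zero_le_one, p, hp, (one_smul ℝ p).symm⟩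
  have hcD : c ∈ D := convexHull_min hσD hDconv hc
  obtain ⟨t, ht, k, hk, rfl⟩ := hcD
  rcases eq_or_lt_of_le ht with h | h
  · exfalso; apply hc0; rw [← h]; simp
  · exact ⟨k, hk, t, h, rfl⟩

set_option maxHeartbeats 4000000

/-- A convexity-preserving map projection sends great-circle arcs into straight lines,
and conversely. -/
theorem convexity_preserving_projection_preserves_geodesics
    (U : Set (EuclideanSpace ℝ (Fin 3))) (V : Set (EuclideanSpace ℝ (Fin 2)))
    (φ : EuclideanSpace ℝ (Fin 3) → EuclideanSpace ℝ (Fin 2))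
    (ψ : EuclideanSpace ℝ (Fin 2) → EuclideanSpace ℝ (Fin 3))
    (hUne : U.Nonempty)
    (hUopen : ∃ G : Set (EuclideanSpace ℝ (Fin 3)), IsOpen G ∧
      U = sphere (0 : EuclideanSpace ℝ (Fin 3)) 1 ∩ G)
    (hhemi : ∃ u : EuclideanSpace ℝ (Fin 3), ‖u‖ = 1 ∧
      U ⊆ {p : EuclideanSpace ℝ (Fin 3) |
        p ∈ sphere (0 : EuclideanSpace ℝ (Fin 3)) 1 ∧ 0 < ⟪p, u⟫})
    (hVopen : IsOpen V)
    (hφV : φ '' U = V) (hψU : ψ '' V = U)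
    (hφcont : ContinuousOn φ U) (hψcont : ContinuousOn ψ V)
    (hψφ : ∀ p ∈ U, ψ (φ p) = p) (hφψ : ∀ q ∈ V, φ (ψ q) = q)
    (hconv : ∀ A : Set (EuclideanSpace ℝ (Fin 3)), SphericallyConvex A →
      (∃ G : Set (EuclideanSpace ℝ (Fin 3)), IsOpen G ∧
        A = sphere (0 : EuclideanSpace ℝ (Fin 3)) 1 ∩ G) →
      closure A ⊆ U → Convex ℝ (φ '' A))
    (hconv' : ∀ A' : Set (EuclideanSpace ℝ (Fin 2)), IsOpen A' → Convex ℝ A' →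
      closure A' ⊆ V → SphericallyConvex (ψ '' A')) :
    (∀ W : Submodule ℝ (EuclideanSpace ℝ (Fin 3)), Module.finrank ℝ W = 2 →
      ∀ σ : Set (EuclideanSpace ℝ (Fin 3)), IsConnected σ → IsCompact σ →
        σ ⊆ U ∩ (W : Set (EuclideanSpace ℝ (Fin 3))) →
        ∃ L : AffineSubspace ℝ (EuclideanSpace ℝ (Fin 2)),
          Module.finrank ℝ L.direction = 1 ∧
          φ '' σ ⊆ (L : Set (EuclideanSpace ℝ (Fin 2)))) ∧
    (∀ L : AffineSubspace ℝ (EuclideanSpace ℝ (Fin 2)),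
      Module.finrank ℝ L.direction = 1 →
      ∀ σ' : Set (EuclideanSpace ℝ (Fin 2)), IsConnected σ' → IsCompact σ' →
        σ' ⊆ V ∩ (L : Set (EuclideanSpace ℝ (Fin 2))) →
        ∃ W' : Submodule ℝ (EuclideanSpace ℝ (Fin 3)), Module.finrank ℝ W' = 2 ∧
          ψ '' σ' ⊆ sphere (0 : EuclideanSpace ℝ (Fin 3)) 1 ∩
            (W' : Set (EuclideanSpace ℝ (Fin 3)))) := by
  
  obtain ⟨G, hG, hUeq⟩ := hUopen
  obtain ⟨u, hu1, hUhemi⟩ := hhemi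
  have hUsphere : U ⊆ sphere (0 : EuclideanSpace ℝ (Fin 3)) 1 := by
    rw [hUeq]; exact Set.inter_subset_left
  have hUG : U ⊆ G := by rw [hUeq]; exact Set.inter_subset_right
  constructor
  · -- part (a)
    intro W hW2 σ hσconn hσcomp hσsub
    have hσU : σ ⊆ U := fun p hp => (hσsub hp).1
    have hσW : ∀ p ∈ σ, p ∈ W := fun p hp => (hσsub hp).2
    have hσne : σ.Nonempty := hσconn.nonempty
    have hσdata : ∀ p ∈ σ, ‖p‖ = 1 ∧ 0 < ⟪p, u⟫ ∧ p ∈ W := by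
      intro p hp
      obtain ⟨hps, hpu⟩ := hUhemi (hσU hp)
      exact ⟨mem_sphere_zero_iff_norm.1 hps, hpu, hσW p hp⟩
    have hσsc : SphericallyConvex σ :=
      sphericallyConvex_of_connected_arc hW2 hσconn.isPreconnected hσdata
    have hcontinner : Continuous fun p : EuclideanSpace ℝ (Fin 3) => (⟪p, u⟫ : ℝ) :=
      continuous_id.inner continuous_const
    obtain ⟨p₀, hp₀, hmin⟩ := hσcomp.exists_isMinOn hσne hcontinner.continuousOn
    set c₀ : ℝ := ⟪p₀, u⟫ with hc₀def
    have hc₀ : 0 < c₀ := (hσdata p₀ hp₀).2.1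
    have hinner : ∀ p ∈ σ, c₀ ≤ ⟪p, u⟫ := fun p hp => hmin hp
    have hlin : IsLinearMap ℝ (fun x : EuclideanSpace ℝ (Fin 3) => ⟪x, u⟫) :=
      ⟨fun a b => inner_add_left a b u, fun t a => real_inner_smul_left a u t⟩
    have hhull : ∀ k ∈ convexHull ℝ σ, c₀ ≤ ⟪k, u⟫ := fun k hk =>
      convexHull_min (fun p hp => hinner p hp) (convex_halfSpace_ge hlin c₀) hk
    have hhullnorm : ∀ k ∈ convexHull ℝ σ, c₀ ≤ ‖k‖ := by
      intro k hk
      calc c₀ ≤ ⟪k, u⟫ := hhull k hk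
        _ ≤ ‖k‖ * ‖u‖ := real_inner_le_norm k u
        _ = ‖k‖ := by rw [hu1, mul_one]
    have hσG : σ ⊆ G := fun p hp => hUG (hσU hp)
    obtain ⟨δ, hδ, hthick⟩ := hσcomp.exists_thickening_subset_open hG hσG
    set ε : ℝ := min (c₀ / 2) (c₀ * δ / 4) with hεdef
    have hε : 0 < ε := lt_min (by positivity) (by positivity)
    set K := convexHull ℝ σ with hKdef
    set C := thickening ε K with hCdef
    have hCconv : Convex ℝ C := (convex_convexHull ℝ σ).thickening ε
    have hCopen : IsOpen C := isOpen_thickening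
    set A := sphere (0 : EuclideanSpace ℝ (Fin 3)) 1 ∩ posCone C with hAdef
    have hAnear : ∀ v ∈ A, ∃ k' ∈ σ, dist v k' ≤ δ / 2 := by
      rintro v ⟨hvs, hvc⟩
      obtain ⟨t, ht, c, hcC, rfl⟩ := hvc
      obtain ⟨k, hkK, hck⟩ := mem_thickening_iff.1 hcC
      have hknorm : c₀ ≤ ‖k‖ := hhullnorm k hkK
      have hk0 : k ≠ 0 := by intro h; rw [h, norm_zero] at hknorm; linarith
      have hεhalf : ε ≤ c₀ / 2 := min_le_left _ _
      have hc0 : c ≠ 0 := by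
        intro h
        rw [h, dist_eq_norm, zero_sub, norm_neg] at hck
        linarith
      obtain ⟨k', hk'σ, s, hs, hks⟩ :=
        normalize_convexHull hσsc (fun p hp => ⟨(hσdata p hp).1, (hσdata p hp).2.1⟩) hkK
      have hk'1 : ‖k'‖ = 1 := (hσdata k' hk'σ).1
      have hnormk : ‖k‖ = s := by
        rw [hks, norm_smul, hk'1, Real.norm_eq_abs, abs_of_pos hs, mul_one]
      have hnk : ‖k‖⁻¹ • k = k' := by
        rw [hnormk, hks, smul_smul, inv_mul_cancel₀ (ne_of_gt hs), one_smul]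
      have hcn : (0:ℝ) < ‖c‖ := norm_pos_iff.2 hc0
      have hv1 : ‖t • c‖ = 1 := mem_sphere_zero_iff_norm.1 hvs
      have htc : t = ‖c‖⁻¹ := by
        apply eq_inv_of_mul_eq_one_left
        rw [← abs_of_pos ht, ← Real.norm_eq_abs, ← norm_smul]
        exact hv1
      refine ⟨k', hk'σ, ?_⟩
      rw [htc, ← hnk, dist_eq_norm]
      have h2 := normalize_dist hc0 hk0
      have hckn : ‖c - k‖ ≤ ε := by rw [← dist_eq_norm]; exact hck.le
      have hεle : ε ≤ c₀ * δ / 4 := min_le_right _ _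
      calc ‖‖c‖⁻¹ • c - ‖k‖⁻¹ • k‖ ≤ 2 * ‖c - k‖ / ‖k‖ := h2
        _ ≤ 2 * ε / c₀ := by gcongr
        _ ≤ 2 * (c₀ * δ / 4) / c₀ := by gcongr
        _ = δ / 2 := by field_simp; ring
    have hAU : closure A ⊆ U := by
      have h1 : A ⊆ sphere (0 : EuclideanSpace ℝ (Fin 3)) 1 ∩ cthickening (δ/2) σ := by
        intro v hv
        obtain ⟨k', hk', hd⟩ := hAnear v hv
        exact ⟨hv.1, mem_cthickening_of_dist_le v k' _ _ hk' hd⟩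
      have h2 : IsClosed (sphere (0 : EuclideanSpace ℝ (Fin 3)) 1 ∩ cthickening (δ/2) σ) :=
        isClosed_sphere.inter isClosed_cthickening
      have h3 := closure_minimal h1 h2
      intro q hq
      obtain ⟨hqs, hqc⟩ := h3 hq
      rw [hUeq]
      exact ⟨hqs, hthick (cthickening_subset_thickening' hδ (by linarith) σ hqc)⟩
    have hAU' : A ⊆ U := fun p hp => hAU (subset_closure hp)
    have hσA : σ ⊆ A := by
      intro p hp
      exact ⟨hUsphere (hσU hp),
        ⟨1, one_pos, p, self_subset_thickening hε K (subset_convexHull ℝ σ hp),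
          (one_smul ℝ p).symm⟩⟩
    have horthrk : Module.finrank ℝ Wᗮ = 1 := by
      have h := W.finrank_add_finrank_orthogonal
      rw [hW2, finrank_euclideanSpace_fin] at h
      omega
    obtain ⟨w, hwW, hw0⟩ := (Submodule.ne_bot_iff Wᗮ).1
      (by intro h; rw [h, finrank_bot] at horthrk; omega)
    have claim : ∀ w' : EuclideanSpace ℝ (Fin 3), w' ∈ Wᗮ → w' ≠ 0 →
        Convex ℝ (φ '' (A ∩ {p | 0 < ⟪p, w'⟫})) ∧ IsOpen (φ '' (A ∩ {p | 0 < ⟪p, w'⟫})) ∧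
        (φ '' (A ∩ {p | 0 < ⟪p, w'⟫})).Nonempty ∧
        φ '' σ ⊆ closure (φ '' (A ∩ {p | 0 < ⟪p, w'⟫})) := by
      intro w' hw' hw'0
      set A' := A ∩ {p | 0 < ⟪p, w'⟫} with hA'def
      have hwn : (0:ℝ) < ‖w'‖ := norm_pos_iff.2 hw'0
      have hO : IsOpen (posCone C ∩ {p : EuclideanSpace ℝ (Fin 3) | 0 < ⟪p, w'⟫}) :=
        (posCone_isOpen hCopen).inter
          (isOpen_lt continuous_const (continuous_id.inner continuous_const))
      have hA'eq : A' = sphere (0 : EuclideanSpace ℝ (Fin 3)) 1 ∩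
          (posCone C ∩ {p | 0 < ⟪p, w'⟫}) := by
        rw [hA'def, hAdef, Set.inter_assoc]
      have hA'clos : closure A' ⊆ U := fun q hq =>
        hAU (closure_mono Set.inter_subset_left hq)
      have hA'U : A' ⊆ U := fun p hp => hA'clos (subset_closure hp)
      have hσclosA' : σ ⊆ closure A' := by
        intro p hp
        have hp1 : ‖p‖ = 1 := (hσdata p hp).1
        have hpK : p ∈ K := subset_convexHull ℝ σ hp
        have hpw' : ⟪p, w'⟫ = 0 :=
          Submodule.inner_right_of_mem_orthogonal (hσW p hp) hw'
        rw [Metric.mem_closure_iff]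
        intro ρ hρ
        set t := min ε ρ / (2 * (‖w'‖ + 1)) with htdef
        have ht : 0 < t := div_pos (lt_min hε hρ) (by positivity)
        have htw1 : t * (‖w'‖ + 1) = min ε ρ / 2 := by
          rw [htdef]; field_simp
        have htw : t * ‖w'‖ < min ε ρ / 2 := by nlinarith
        have hptw : ⟪p + t • w', w'⟫ = t * ‖w'‖ ^ 2 := by
          rw [inner_add_left, real_inner_smul_left, hpw', real_inner_self_eq_norm_sq]
          ring
        have hpt0 : p + t • w' ≠ 0 := by
          intro h; rw [h, inner_zero_left] at hptw
          have := mul_pos ht (pow_pos hwn 2)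
          linarith
        have hdistC : p + t • w' ∈ C := by
          refine mem_thickening_iff.2 ⟨p, hpK, ?_⟩
          rw [dist_eq_norm, add_sub_cancel_left, norm_smul, Real.norm_eq_abs, abs_of_pos ht]
          have h1 : min ε ρ ≤ ε := min_le_left _ _
          nlinarith
        refine ⟨‖p + t • w'‖⁻¹ • (p + t • w'), ⟨⟨?_, ?_⟩, ?_⟩, ?_⟩
        · exact mem_sphere_zero_iff_norm.2 (norm_smul_inv_norm hpt0)
        · exact ⟨‖p + t • w'‖⁻¹, inv_pos.2 (norm_pos_iff.2 hpt0), p + t • w', hdistC, rfl⟩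
        · show 0 < ⟪‖p + t • w'‖⁻¹ • (p + t • w'), w'⟫
          rw [real_inner_smul_left, hptw]
          have h1 : (0:ℝ) < ‖p + t • w'‖ := norm_pos_iff.2 hpt0
          positivity
        · have hp0 : p ≠ 0 := by
            intro h; rw [h, norm_zero] at hp1; norm_num at hp1
          have hnd := normalize_dist hpt0 hp0
          rw [hp1, inv_one, one_smul, div_one, add_sub_cancel_left, norm_smul,
            Real.norm_eq_abs, abs_of_pos ht] at hnd
          rw [dist_comm, dist_eq_norm]
          have h1 : min ε ρ ≤ ρ := min_le_right _ _
          calc ‖‖p + t • w'‖⁻¹ • (p + t • w') - p‖ ≤ 2 * (t * ‖w'‖) := hnd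
            _ < ρ := by nlinarith
      have hA'sc : SphericallyConvex A' := by
        rw [hA'def, hAdef]
        exact sphericallyConvex_inter_halfspace (sphericallyConvex_sphere_inter_posCone hCconv) w'
      have hconvA' : Convex ℝ (φ '' A') := hconv A' hA'sc ⟨_, hO, hA'eq⟩ hA'clos
      have hA'ne : A'.Nonempty := by
        obtain ⟨p, hp⟩ := hσne
        exact closure_nonempty_iff.1 ⟨p, hσclosA' hp⟩
      have himg : φ '' A' = V ∩ ψ ⁻¹' (posCone C ∩ {p | 0 < ⟪p, w'⟫}) := by
        have hA'eq2 : A' = U ∩ (posCone C ∩ {p | 0 < ⟪p, w'⟫}) := by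
          apply Set.Subset.antisymm
          · intro p hp
            exact ⟨hA'U hp, hp.1.2, hp.2⟩
          · rintro p ⟨hpU, hpc, hpw⟩
            exact ⟨⟨hUsphere hpU, hpc⟩, hpw⟩
        rw [hA'eq2]
        exact image_inter_eq hφV hψU hψφ hφψ _
      have hopenA' : IsOpen (φ '' A') := by
        rw [himg]; exact hψcont.isOpen_inter_preimage hVopen hO
      have hmapsclos : φ '' σ ⊆ closure (φ '' A') := by
        rintro _ ⟨p, hp, rfl⟩
        exact ((hφcont p (hσU hp)).mono hA'U).mem_closure_image (hσclosA' hp)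
      exact ⟨hconvA', hopenA', hA'ne.image φ, hmapsclos⟩
    obtain ⟨hcv1, hop1, hne1, hcl1⟩ := claim w hwW hw0
    obtain ⟨hcv2, hop2, hne2, hcl2⟩ := claim (-w) (Submodule.neg_mem _ hwW) (neg_ne_zero.2 hw0)
    have hdisj : Disjoint (φ '' (A ∩ {p | 0 < ⟪p, w⟫})) (φ '' (A ∩ {p | 0 < ⟪p, -w⟫})) := by
      rw [Set.disjoint_left]
      rintro q ⟨a, ⟨haA, haw⟩, rfl⟩ ⟨b, ⟨hbA, hbw⟩, hba⟩
      have haU : a ∈ U := hAU' haA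
      have hbU : b ∈ U := hAU' hbA
      have hab : b = a := by
        have h1 := hψφ a haU
        have h2 := hψφ b hbU
        rw [← h2, hba, h1]
      rw [hab] at hbw
      simp only [Set.mem_setOf_eq, inner_neg_right] at haw hbw
      linarith
    obtain ⟨f, u', hf1, hf2⟩ := geometric_hahn_banach_open_open hcv1 hop1 hcv2 hop2 hdisj
    have hσf : ∀ q ∈ φ '' σ, f q = u' := by
      intro q hq
      have h1 : f q ≤ u' :=
        closure_minimal (fun y hy => (hf1 y hy).le)
          (isClosed_le f.continuous continuous_const) (hcl1 hq)
      have h2 : u' ≤ f q :=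
        closure_minimal (fun y hy => (hf2 y hy).le)
          (isClosed_le continuous_const f.continuous) (hcl2 hq)
      linarith
    obtain ⟨a₀, ha₀⟩ := hne1
    obtain ⟨b₀, hb₀⟩ := hne2
    have hfa : f a₀ < u' := hf1 a₀ ha₀
    have hfb : u' < f b₀ := hf2 b₀ hb₀
    set x₁ := b₀ - a₀ with hx₁def
    have hfx₁ : f x₁ ≠ 0 := by
      rw [hx₁def, map_sub]
      intro h
      have : f b₀ = f a₀ := by linarith [sub_eq_zero.1 h]
      linarith
    set x₀ := (u' / f x₁) • x₁ with hx₀def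
    have hfx₀ : f x₀ = u' := by
      rw [hx₀def, map_smul, smul_eq_mul]
      field_simp
    refine ⟨AffineSubspace.mk' x₀ (LinearMap.ker (f : EuclideanSpace ℝ (Fin 2) →ₗ[ℝ] ℝ)), ?_, ?_⟩
    · rw [AffineSubspace.direction_mk']
      have hrange : LinearMap.range (f : EuclideanSpace ℝ (Fin 2) →ₗ[ℝ] ℝ) = ⊤ := by
        rw [LinearMap.range_eq_top]
        intro c
        refine ⟨(c / f x₁) • x₁, ?_⟩
        show f ((c / f x₁) • x₁) = c
        rw [map_smul, smul_eq_mul]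
        field_simp
      have hrk := LinearMap.finrank_range_add_finrank_ker
        (f : EuclideanSpace ℝ (Fin 2) →ₗ[ℝ] ℝ)
      rw [hrange, finrank_top, finrank_euclideanSpace_fin, Module.finrank_self] at hrk
      omega
    · rintro _ ⟨p, hp, rfl⟩
      rw [SetLike.mem_coe, AffineSubspace.mem_mk', LinearMap.mem_ker]
      show f (φ p - x₀) = 0
      rw [map_sub, hσf (φ p) ⟨p, hp, rfl⟩, hfx₀, sub_self]
  · intro L hL1 σ' hσ'conn hσ'comp hσ'sub
    have hσ'V : σ' ⊆ V := fun q hq => (hσ'sub hq).1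
    have hσ'L : ∀ q ∈ σ', q ∈ L := fun q hq => (hσ'sub hq).2
    have hσ'ne : σ'.Nonempty := hσ'conn.nonempty
    obtain ⟨x₀, hx₀σ'⟩ := hσ'ne
    have hx₀L : x₀ ∈ L := hσ'L x₀ hx₀σ'
    obtain ⟨d, hdL, hd0⟩ := (Submodule.ne_bot_iff L.direction).1
      (by intro h; rw [h, finrank_bot] at hL1; omega)
    have hspan : Submodule.span ℝ {d} = L.direction := by
      apply Submodule.eq_of_le_of_finrank_le (Submodule.span_le.2 (by simpa using hdL))
      rw [hL1, finrank_span_singleton hd0]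
    have hd2 : (0:ℝ) < ‖d‖ ^ 2 := pow_pos (norm_pos_iff.2 hd0) 2
    have hgh : ∀ x ∈ L, x₀ + (⟪x - x₀, d⟫ / ‖d‖ ^ 2) • d = x := by
      intro x hxL
      have hxd : x - x₀ ∈ L.direction := by
        have := AffineSubspace.vsub_mem_direction hxL hx₀L
        exact this
      rw [← hspan, Submodule.mem_span_singleton] at hxd
      obtain ⟨a, ha⟩ := hxd
      have h1 : ⟪x - x₀, d⟫ = a * ‖d‖ ^ 2 := by
        rw [← ha, real_inner_smul_left, real_inner_self_eq_norm_sq]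
      have h2 : ⟪x - x₀, d⟫ / ‖d‖ ^ 2 = a := by
        rw [h1]; field_simp
      rw [h2, ha]
      abel
    have hσ'convex : Convex ℝ σ' := by
      have hgcont : Continuous fun x : EuclideanSpace ℝ (Fin 2) => ⟪x - x₀, d⟫ / ‖d‖ ^ 2 :=
        ((continuous_id.sub continuous_const).inner continuous_const).div_const _
      have himg : σ' = (fun a : ℝ => x₀ + a • d) ''
          ((fun x => ⟪x - x₀, d⟫ / ‖d‖ ^ 2) '' σ') := by
        rw [Set.image_image]
        ext q
        constructor
        · intro hq; exact ⟨q, hq, hgh q (hσ'L q hq)⟩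
        · rintro ⟨x, hx, rfl⟩
          show x₀ + (⟪x - x₀, d⟫ / ‖d‖ ^ 2) • d ∈ σ'
          rw [hgh x (hσ'L x hx)]; exact hx
      have hTconv : Convex ℝ ((fun x => ⟪x - x₀, d⟫ / ‖d‖ ^ 2) '' σ') :=
        IsPreconnected.convex (hσ'conn.isPreconnected.image _ hgcont.continuousOn)
      rw [himg]
      have himg2 : (fun a : ℝ => x₀ + a • d) '' ((fun x => ⟪x - x₀, d⟫ / ‖d‖ ^ 2) '' σ') =
          (fun v => x₀ + v) '' ((fun a : ℝ => a • d) ''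
            ((fun x => ⟪x - x₀, d⟫ / ‖d‖ ^ 2) '' σ')) :=
        (Set.image_image (fun v => x₀ + v) (fun a : ℝ => a • d) _).symm
      rw [himg2]
      exact (hTconv.is_linear_image
        ⟨fun a b => add_smul a b d, fun c a => by simp [smul_eq_mul, mul_smul]⟩).translate x₀
    have hdirorth : Module.finrank ℝ L.directionᗮ = 1 := by
      have h := L.direction.finrank_add_finrank_orthogonal
      rw [hL1, finrank_euclideanSpace_fin] at h
      omega
    obtain ⟨n, hnO, hn0⟩ := (Submodule.ne_bot_iff L.directionᗮ).1
      (by intro h; rw [h, finrank_bot] at hdirorth; omega)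
    have hσ'inner : ∀ n' : EuclideanSpace ℝ (Fin 2), n' ∈ L.directionᗮ →
        ∀ q ∈ σ', ⟪q - x₀, n'⟫ = 0 := by
      intro n' hn' q hq
      have h1 : q - x₀ ∈ L.direction := by
        have := AffineSubspace.vsub_mem_direction (hσ'L q hq) hx₀L
        exact this
      exact Submodule.inner_right_of_mem_orthogonal h1 hn'
    obtain ⟨δ, hδ, hthick⟩ := hσ'comp.exists_thickening_subset_open hVopen hσ'V
    set A' := thickening (δ/2) σ' with hA'def
    have hA'conv : Convex ℝ A' := hσ'convex.thickening _
    have hA'open : IsOpen A' := isOpen_thickening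
    have hσ'A' : σ' ⊆ A' := self_subset_thickening (by linarith) σ'
    have hA'V : A' ⊆ V := fun q hq => hthick (thickening_mono (by linarith) σ' hq)
    have hA'clos : closure A' ⊆ V := by
      intro q hq
      exact hthick (cthickening_subset_thickening' hδ (by linarith) σ'
        (closure_thickening_subset_cthickening _ _ hq))
    have claim : ∀ n' : EuclideanSpace ℝ (Fin 2), n' ∈ L.directionᗮ → n' ≠ 0 →
        Convex ℝ (posCone (ψ '' (A' ∩ {x | 0 < ⟪x - x₀, n'⟫}))) ∧
        IsOpen (posCone (ψ '' (A' ∩ {x | 0 < ⟪x - x₀, n'⟫}))) ∧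
        (ψ '' (A' ∩ {x | 0 < ⟪x - x₀, n'⟫})).Nonempty ∧
        ψ '' σ' ⊆ closure (ψ '' (A' ∩ {x | 0 < ⟪x - x₀, n'⟫})) ∧
        ψ '' (A' ∩ {x | 0 < ⟪x - x₀, n'⟫}) ⊆
          {p : EuclideanSpace ℝ (Fin 3) | p ∈ sphere (0 : EuclideanSpace ℝ (Fin 3)) 1 ∧
            0 < ⟪p, u⟫} := by
      intro n' hn' hn'0
      have hnn : (0:ℝ) < ‖n'‖ := norm_pos_iff.2 hn'0
      set H := {x : EuclideanSpace ℝ (Fin 2) | 0 < ⟪x - x₀, n'⟫} with hHdef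
      have hHopen : IsOpen H :=
        isOpen_lt continuous_const ((continuous_id.sub continuous_const).inner continuous_const)
      have hHconv : Convex ℝ H := by
        have hlin2 : IsLinearMap ℝ (fun x : EuclideanSpace ℝ (Fin 2) => ⟪x, n'⟫) :=
          ⟨fun a b => inner_add_left a b n', fun t a => real_inner_smul_left a n' t⟩
        have : H = {x | ⟪x₀, n'⟫ < ⟪x, n'⟫} := by
          ext x
          simp only [hHdef, Set.mem_setOf_eq, inner_sub_left, sub_pos]
        rw [this]
        exact convex_halfSpace_gt hlin2 _
      set B := A' ∩ H with hBdef
      have hBopen : IsOpen B := hA'open.inter hHopen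
      have hBconv : Convex ℝ B := hA'conv.inter hHconv
      have hBV : B ⊆ V := fun q hq => hA'V hq.1
      have hBclos : closure B ⊆ V := fun q hq =>
        hA'clos (closure_mono Set.inter_subset_left hq)
      have hSsc : SphericallyConvex (ψ '' B) := hconv' B hBopen hBconv hBclos
      have hSU : ψ '' B ⊆ U := by
        rintro _ ⟨q, hq, rfl⟩
        exact hψU ▸ ⟨q, hBV hq, rfl⟩
      have hShemi : ψ '' B ⊆ {p : EuclideanSpace ℝ (Fin 3) |
          p ∈ sphere (0 : EuclideanSpace ℝ (Fin 3)) 1 ∧ 0 < ⟪p, u⟫} :=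
        fun p hp => hUhemi (hSU hp)
      have hSdata : ∀ p ∈ ψ '' B, ‖p‖ = 1 ∧ 0 < ⟪p, u⟫ := by
        intro p hp
        obtain ⟨h1, h2⟩ := hShemi hp
        exact ⟨mem_sphere_zero_iff_norm.1 h1, h2⟩
      have hσ'closB : σ' ⊆ closure B := by
        intro q hq
        rw [Metric.mem_closure_iff]
        intro ρ hρ
        set t := min (δ/2) ρ / (2 * (‖n'‖ + 1)) with htdef
        have hmin2 : (0:ℝ) < min (δ/2) ρ := lt_min (by linarith) hρ
        have ht : 0 < t := div_pos hmin2 (by positivity)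
        have htw : t * ‖n'‖ < min (δ/2) ρ / 2 := by
          rw [htdef]
          rw [div_mul_eq_mul_div, div_lt_div_iff₀ (by positivity) two_pos]
          nlinarith
        refine ⟨q + t • n', ⟨?_, ?_⟩, ?_⟩
        · refine mem_thickening_iff.2 ⟨q, hq, ?_⟩
          rw [dist_eq_norm, add_sub_cancel_left, norm_smul, Real.norm_eq_abs, abs_of_pos ht]
          have : min (δ/2) ρ ≤ δ/2 := min_le_left _ _
          linarith
        · show 0 < ⟪q + t • n' - x₀, n'⟫
          have h1 : q + t • n' - x₀ = (q - x₀) + t • n' := by abel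
          rw [h1, inner_add_left, hσ'inner n' hn' q hq, real_inner_smul_left,
            real_inner_self_eq_norm_sq, zero_add]
          positivity
        · rw [dist_eq_norm]
          have h2 : q - (q + t • n') = -(t • n') := by abel
          rw [h2, norm_neg, norm_smul, Real.norm_eq_abs, abs_of_pos ht]
          have : min (δ/2) ρ ≤ ρ := min_le_right _ _
          nlinarith
      have hψclos : ψ '' σ' ⊆ closure (ψ '' B) := by
        rintro _ ⟨q, hq, rfl⟩
        exact ((hψcont q (hσ'V hq)).mono hBV).mem_closure_image (hσ'closB hq)
      have hSne : (ψ '' B).Nonempty := by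
        have h1 : ψ x₀ ∈ closure (ψ '' B) := hψclos ⟨x₀, hx₀σ', rfl⟩
        exact closure_nonempty_iff.1 ⟨ψ x₀, h1⟩
      obtain ⟨O, hOopen, hOeq⟩ := continuousOn_iff'.1 hφcont B hBopen
      have hSeq : ψ '' B = U ∩ φ ⁻¹' B := by
        ext p
        constructor
        · rintro ⟨q, hq, rfl⟩
          have hqV : q ∈ V := hBV hq
          refine ⟨hψU ▸ ⟨q, hqV, rfl⟩, ?_⟩
          rw [Set.mem_preimage, hφψ q hqV]
          exact hq
        · rintro ⟨hpU, hpB⟩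
          exact ⟨φ p, hpB, hψφ p hpU⟩
      have hSeq2 : ψ '' B = sphere (0 : EuclideanSpace ℝ (Fin 3)) 1 ∩ (G ∩ O) := by
        rw [hSeq]
        have h1 : U ∩ φ ⁻¹' B = U ∩ O := by
          rw [Set.inter_comm U (φ ⁻¹' B), Set.inter_comm U O]
          exact hOeq
        rw [h1, hUeq, Set.inter_assoc]
      constructor
      · exact posCone_convex_of_sphericallyConvex hSsc hSdata
      refine ⟨?_, hSne, hψclos, hShemi⟩
      rw [hSeq2]
      exact posCone_isOpen_sphere (hG.inter hOopen)
    obtain ⟨hcv1, hop1, hne1, hcl1, hhemi1⟩ := claim n hnO hn0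
    obtain ⟨hcv2, hop2, hne2, hcl2, hhemi2⟩ :=
      claim (-n) (Submodule.neg_mem _ hnO) (neg_ne_zero.2 hn0)
    have hsph1 : ψ '' (A' ∩ {x | 0 < ⟪x - x₀, n⟫}) ⊆
        sphere (0 : EuclideanSpace ℝ (Fin 3)) 1 := fun p hp => (hhemi1 hp).1
    have hsph2 : ψ '' (A' ∩ {x | 0 < ⟪x - x₀, -n⟫}) ⊆
        sphere (0 : EuclideanSpace ℝ (Fin 3)) 1 := fun p hp => (hhemi2 hp).1
    have hdisj : Disjoint (posCone (ψ '' (A' ∩ {x | 0 < ⟪x - x₀, n⟫})))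
        (posCone (ψ '' (A' ∩ {x | 0 < ⟪x - x₀, -n⟫}))) := by
      rw [Set.disjoint_left]
      intro v hv1 hv2
      obtain ⟨hv0, hm1⟩ := (mem_posCone_iff hsph1).1 hv1
      obtain ⟨-, hm2⟩ := (mem_posCone_iff hsph2).1 hv2
      obtain ⟨q₁, hq₁, he₁⟩ := hm1
      obtain ⟨q₂, hq₂, he₂⟩ := hm2
      have hq₁V : q₁ ∈ V := hA'V hq₁.1
      have hq₂V : q₂ ∈ V := hA'V hq₂.1
      have hq12 : q₁ = q₂ := by
        have h1 := hφψ q₁ hq₁V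
        have h2 := hφψ q₂ hq₂V
        rw [← h1, ← h2, he₁, he₂]
      have ha := hq₁.2
      have hb := hq₂.2
      rw [← hq12] at hb
      simp only [Set.mem_setOf_eq, inner_neg_right] at ha hb
      linarith
    obtain ⟨f, u', hf1, hf2⟩ := geometric_hahn_banach_open_open hcv1 hop1 hcv2 hop2 hdisj
    obtain ⟨v₀, hv₀⟩ := hne1
    obtain ⟨w₀, hw₀⟩ := hne2
    have hSsubC1 : ψ '' (A' ∩ {x | 0 < ⟪x - x₀, n⟫}) ⊆
        posCone (ψ '' (A' ∩ {x | 0 < ⟪x - x₀, n⟫})) :=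
      fun p hp => ⟨1, one_pos, p, hp, (one_smul ℝ p).symm⟩
    have hSsubC2 : ψ '' (A' ∩ {x | 0 < ⟪x - x₀, -n⟫}) ⊆
        posCone (ψ '' (A' ∩ {x | 0 < ⟪x - x₀, -n⟫})) :=
      fun p hp => ⟨1, one_pos, p, hp, (one_smul ℝ p).symm⟩
    have hfv₀ : f v₀ < u' := hf1 v₀ (hSsubC1 hv₀)
    have hfw₀ : u' < f w₀ := hf2 w₀ (hSsubC2 hw₀)
    have hu'0 : u' = 0 := by
      have h0le : 0 ≤ u' := by
        by_contra h
        push_neg at h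
        have hfv0 : f v₀ < 0 := by linarith
        have ht : 0 < u' / (2 * f v₀) := div_pos_of_neg_of_neg h (by linarith)
        have hmem := posCone_smul ht (hSsubC1 hv₀)
        have hlt := hf1 _ hmem
        rw [map_smul, smul_eq_mul] at hlt
        have heq : u' / (2 * f v₀) * f v₀ = u' / 2 := by
          rw [div_mul_eq_mul_div, mul_comm (2:ℝ) (f v₀), ← div_div, mul_div_assoc,
            div_self (by linarith : f v₀ ≠ (0:ℝ)), mul_one]
        rw [heq] at hlt
        linarith
      have h0ge : u' ≤ 0 := by
        by_contra h
        push_neg at h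
        have hfw0 : 0 < f w₀ := by linarith
        have ht : 0 < u' / (2 * f w₀) := div_pos h (by linarith)
        have hmem := posCone_smul ht (hSsubC2 hw₀)
        have hlt := hf2 _ hmem
        rw [map_smul, smul_eq_mul] at hlt
        have heq : u' / (2 * f w₀) * f w₀ = u' / 2 := by
          rw [div_mul_eq_mul_div, mul_comm (2:ℝ) (f w₀), ← div_div, mul_div_assoc,
            div_self (by linarith : f w₀ ≠ (0:ℝ)), mul_one]
        rw [heq] at hlt
        linarith
      linarith
    have hker : ∀ p ∈ ψ '' σ', f p = 0 := by
      intro p hp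
      have h1 : f p ≤ u' :=
        closure_minimal (fun y hy => (hf1 y (hSsubC1 hy)).le)
          (isClosed_le f.continuous continuous_const) (hcl1 hp)
      have h2 : u' ≤ f p :=
        closure_minimal (fun y hy => (hf2 y (hSsubC2 hy)).le)
          (isClosed_le continuous_const f.continuous) (hcl2 hp)
      rw [hu'0] at h1 h2
      linarith
    have hfne : f v₀ ≠ 0 := by rw [hu'0] at hfv₀; linarith
    refine ⟨LinearMap.ker (f : EuclideanSpace ℝ (Fin 3) →ₗ[ℝ] ℝ), ?_, ?_⟩
    · have hrange : LinearMap.range (f : EuclideanSpace ℝ (Fin 3) →ₗ[ℝ] ℝ) = ⊤ := by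
        rw [LinearMap.range_eq_top]
        intro c
        refine ⟨(c / f v₀) • v₀, ?_⟩
        show f ((c / f v₀) • v₀) = c
        rw [map_smul, smul_eq_mul]
        field_simp
      have hrk := LinearMap.finrank_range_add_finrank_ker
        (f : EuclideanSpace ℝ (Fin 3) →ₗ[ℝ] ℝ)
      rw [hrange, finrank_top, finrank_euclideanSpace_fin, Module.finrank_self] at hrk
      omega
    · rintro _ ⟨q, hq, rfl⟩
      refine ⟨hUsphere (hψU ▸ ⟨q, hσ'V hq, rfl⟩), ?_⟩
      rw [SetLike.mem_coe, LinearMap.mem_ker]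
      show f (ψ q) = 0
      exact hker (ψ q) ⟨q, hq, rfl⟩
end
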